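/- arXiv:0801.0005 — 11 statements merged into one kernel-verified Lean document; each statement's English description precedes it below -/
import Mathlib

section
/- Let n ≥ 1 and let D ⊂ ℤ^n be a finite set. For λ ∈ D let p_λ = (v^{λ_1},…,v^{λ_n}) ∈ ℚ(v)^n. Let L = ℚ(v)[K_1^{±1},…,K_n^{±1}] be the Laurent polynomial ring and let φ : L → ∏_{λ∈D} ℚ(v) be the ℚ(v)-algebra homomorphism whose λ-th component is evaluation at p_λ. Then the kernel of φ equals the ideal of L generated by the elements F_h = ∏_{λ∈D} (K_h − v^{⟨h,λ⟩}) as h ranges over ℤ^n, where K_h = K_1^{h_1}⋯K_n^{h_n}. -/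
/-!
Evaluation at each `p_λ` kills every `F_h`, so the ideal lies in the kernel. Conversely, choose `w`
with `λ ↦ ⟨w, λ⟩` injective on `D` and work in the quotient `Q` by the ideal. There
`t = K_w` satisfies `∏_λ (t - v^⟨w,λ⟩) = F_w = 0` with pairwise coprime factors, so it suffices
that `f` vanishes in `Q / (t - v^⟨w,λ⟩)` for each `λ ∈ D`. In that ring, applying `F_{h + N w}`
shows that `K_h` is a root of `∏_ν (X - v^(⟨h,ν⟩ + N ⟨w, ν - λ⟩))` for every `N`; for `N = 0` and
`N` large these polynomials share only the root `v^⟨h,λ⟩`. Hence `K_h = v^⟨h,λ⟩` there, and `f`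
maps to `φ_λ(f) = 0`.
-/

open AddMonoidAlgebra Finset

noncomputable section

namespace LaurentEval

variable {k : Type*} [Field k] {n : ℕ}

lemma exists_nat_forall_ne_mul {ι : Type*} (s : Finset ι) (a b : ι → ℤ)
    (hb : ∀ i ∈ s, b i ≠ 0) : ∃ M : ℕ, ∀ i ∈ s, a i ≠ M * b i := by
  -- each `i` rules out at most the value `M = a i / b i`
  obtain ⟨M, hM⟩ := Infinite.exists_notMem_finset (s.image fun i => (a i / b i).toNat)
  refine ⟨M, fun i hi h => hM (mem_image.2 ⟨i, hi, ?_⟩)⟩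
  rw [h, Int.mul_ediv_cancel _ (hb i hi), Int.toNat_natCast]

open Polynomial in
lemma exists_injOn_dotProduct {R : Type*} [CommRing R] [IsDomain R] [Infinite R]
    (D : Finset (Fin n → R)) : ∃ w : Fin n → R, Set.InjOn (w ⬝ᵥ ·) D := by
  classical
  let P (d : Fin n → R) : R[X] := ∑ a, C (d a) * X ^ (a : ℕ)
  have coeff_P (d : Fin n → R) (a : Fin n) : (P d).coeff a = d a := by
    simp [P, Fin.val_inj]
  have hP : ∏ p ∈ D.offDiag, (P p.1 - P p.2) ≠ 0 := by
    refine prod_ne_zero_iff.2 fun p hp h => (mem_offDiag.1 hp).2.2 (funext fun a => ?_)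
    simpa [coeff_P] using congr(coeff $(sub_eq_zero.1 h) a)
  obtain ⟨t, ht⟩ : ∃ t, (∏ p ∈ D.offDiag, (P p.1 - P p.2)).eval t ≠ 0 := by
    by_contra! h
    exact hP (Polynomial.funext (by simpa using h))
  -- Kronecker substitution: `(t ^ a)_a ⬝ᵥ d = (P d).eval t`
  refine ⟨fun a => t ^ (a : ℕ), fun d hd d' hd' hdd' => by_contra fun hne => ?_⟩
  rw [eval_prod, prod_ne_zero_iff] at ht
  refine ht (d, d') (mem_offDiag.2 ⟨hd, hd', hne⟩) ?_
  simp only [P, eval_sub, eval_finsetSum, eval_mul, eval_C, eval_pow, eval_X]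
  simpa [dotProduct, mul_comm, sub_eq_zero] using hdd'

lemma isCoprime_sub_algebraMap {Q : Type*} [CommRing Q] [Algebra k Q] (x : Q) {a b : k}
    (hab : a ≠ b) : IsCoprime (x - algebraMap k Q a) (x - algebraMap k Q b) := by
  simpa using (Polynomial.isCoprime_X_sub_C_of_isUnit_sub (sub_ne_zero.2 hab).isUnit).map
    (Polynomial.aeval (R := k) x).toRingHom

lemma eq_zero_of_mul_eq_zero_of_isCoprime {R : Type*} [CommRing R] {a b y : R}
    (hab : IsCoprime a b) (ha : y * a = 0) (hb : y * b = 0) : y = 0 := by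
  obtain ⟨c, d, hcd⟩ := hab
  linear_combination -y * hcd + c * ha + d * hb

lemma injective_val_zpow {M : Type*} [Monoid M] {u : Mˣ} (hu : ¬IsOfFinOrder u) :
    Function.Injective fun m : ℤ => ((u ^ m : Mˣ) : M) :=
  Units.val_injective.comp (injective_zpow_iff_not_isOfFinOrder.2 hu)

def monomialChar (p : Fin n → kˣ) : Multiplicative (Fin n → ℤ) →* kˣ where
  toFun h := ∏ a, p a ^ h.toAdd a
  map_one' := by simp
  map_mul' g h := by simp [zpow_add, prod_mul_distrib]

def evalAt (p : Fin n → kˣ) : AddMonoidAlgebra k (Fin n → ℤ) →ₐ[k] k :=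
  lift k k (Fin n → ℤ) ((Units.coeHom k).comp (monomialChar p))

lemma evalAt_apply (p : Fin n → kˣ) (f : AddMonoidAlgebra k (Fin n → ℤ)) :
    evalAt p f = f.coeff.sum fun h c => c * ∏ a, (p a : k) ^ h a := by
  simp [evalAt, lift_apply, monomialChar, Units.val_zpow_eq_zpow_val]

lemma evalAt_single_one_zpow (u : kˣ) (lam h : Fin n → ℤ) :
    evalAt (fun a => u ^ lam a) (single h 1) = ((u ^ (h ⬝ᵥ lam) : kˣ) : k) := by
  rw [evalAt, lift_single, one_smul]
  change ((∏ a, (u ^ lam a) ^ h a : kˣ) : k) = _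
  congr 1
  simp_rw [← zpow_mul, dotProduct, mul_comm (lam _)]
  have := map_prod (zpowersHom kˣ u) (fun a => .ofAdd (h a * lam a)) univ
  rw [← ofAdd_sum] at this
  simpa only [zpowersHom_apply, toAdd_ofAdd] using this.symm

variable (u : kˣ) (D : Finset (Fin n → ℤ))

def relator (h : Fin n → ℤ) : AddMonoidAlgebra k (Fin n → ℤ) :=
  ∏ lam ∈ D, (single h 1 - algebraMap k _ ((u ^ (h ⬝ᵥ lam) : kˣ) : k))

def relatorIdeal : Ideal (AddMonoidAlgebra k (Fin n → ℤ)) :=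
  Ideal.span (Set.range (relator u D))

variable {u D} {Q : Type*} [CommRing Q] [Algebra k Q]
  {ψ : AddMonoidAlgebra k (Fin n → ℤ) →ₐ[k] Q} {lam w : Fin n → ℤ}

lemma prod_sub_shift_eq_zero (hψ : ∀ h, ψ (relator u D h) = 0)
    (hw : ψ (single w 1) = algebraMap k Q ((u ^ (w ⬝ᵥ lam) : kˣ) : k)) (h : Fin n → ℤ) (N : ℕ) :
    ∏ ν ∈ D, (ψ (single h 1) -
      algebraMap k Q ((u ^ (h ⬝ᵥ ν + N * (w ⬝ᵥ ν - w ⬝ᵥ lam)) : kˣ) : k)) = 0 := by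
  set A := algebraMap k Q
  set c : kˣ := u ^ (N * (w ⬝ᵥ lam))
  have hshift : ψ (single (h + N • w) 1) = A c * ψ (single h 1) := by
    have : single (h + N • w) (1 : k) = single h 1 * single w 1 ^ N := by
      rw [single_pow, one_pow, single_mul_single, one_mul]
    rw [this, map_mul, map_pow, hw, ← map_pow, ← Units.val_pow_eq_pow_val, ← zpow_natCast,
      ← zpow_mul, mul_comm, mul_comm (w ⬝ᵥ lam)]
  have factor : ∀ ν ∈ D, ψ (single (h + N • w) 1) - A ((u ^ ((h + N • w) ⬝ᵥ ν) : kˣ) : k) =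
      A c * (ψ (single h 1) - A ((u ^ (h ⬝ᵥ ν + N * (w ⬝ᵥ ν - w ⬝ᵥ lam)) : kˣ) : k)) := by
    intro ν _
    have : (h + N • w) ⬝ᵥ ν = N * (w ⬝ᵥ lam) + (h ⬝ᵥ ν + N * (w ⬝ᵥ ν - w ⬝ᵥ lam)) := by
      rw [add_dotProduct, smul_dotProduct, nsmul_eq_mul]; ring
    rw [hshift, this, zpow_add, Units.val_mul, map_mul, ← mul_sub]
  have hrel := hψ (h + N • w)
  rw [relator, map_prod] at hrel
  simp only [map_sub, AlgHom.commutes] at hrel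
  rw [prod_congr rfl factor, prod_mul_distrib, prod_const] at hrel
  exact ((c.isUnit.map A).pow _).mul_right_eq_zero.mp hrel

lemma apply_single_eq_of_relator (hu : ¬IsOfFinOrder u) (hψ : ∀ h, ψ (relator u D h) = 0)
    (hlam : lam ∈ D) (hsep : ∀ ν ∈ D, ν ≠ lam → w ⬝ᵥ ν ≠ w ⬝ᵥ lam)
    (hw : ψ (single w 1) = algebraMap k Q ((u ^ (w ⬝ᵥ lam) : kˣ) : k)) (h : Fin n → ℤ) :
    ψ (single h 1) = algebraMap k Q ((u ^ (h ⬝ᵥ lam) : kˣ) : k) := by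
  set A := algebraMap k Q
  set x := ψ (single h 1)
  let e (N : ℕ) (ν : Fin n → ℤ) : ℤ := h ⬝ᵥ ν + N * (w ⬝ᵥ ν - w ⬝ᵥ lam)
  let R (N : ℕ) : Q := ∏ ν ∈ D.erase lam, (x - A ((u ^ e N ν : kˣ) : k))
  have hR (N : ℕ) : (x - A ((u ^ (h ⬝ᵥ lam) : kˣ) : k)) * R N = 0 := by
    rw [← prod_sub_shift_eq_zero hψ hw h N, ← mul_prod_erase D _ hlam, sub_self, mul_zero,
      add_zero]
  obtain ⟨M, hM⟩ := exists_nat_forall_ne_mul ((D.erase lam) ×ˢ (D.erase lam))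
    (fun p => h ⬝ᵥ p.1 - h ⬝ᵥ p.2) (fun p => w ⬝ᵥ p.2 - w ⬝ᵥ lam)
    fun p hp => sub_ne_zero.2 (hsep _ (mem_of_mem_erase (mem_product.1 hp).2)
      (ne_of_mem_erase (mem_product.1 hp).2))
  have hcop : IsCoprime (R 0) (R M) := by
    refine IsCoprime.prod_left fun ν hν => IsCoprime.prod_right fun ν' hν' => ?_
    refine isCoprime_sub_algebraMap x ((injective_val_zpow hu).ne fun hee => ?_)
    refine hM (ν, ν') (mem_product.2 ⟨hν, hν'⟩) ?_
    simp only [e, Nat.cast_zero, zero_mul, add_zero] at hee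
    linarith
  exact sub_eq_zero.1 (eq_zero_of_mul_eq_zero_of_isCoprime hcop (hR 0) (hR M))

lemma eq_comp_evalAt_of_relator (hu : ¬IsOfFinOrder u) (hψ : ∀ h, ψ (relator u D h) = 0)
    (hlam : lam ∈ D) (hsep : ∀ ν ∈ D, ν ≠ lam → w ⬝ᵥ ν ≠ w ⬝ᵥ lam)
    (hw : ψ (single w 1) = algebraMap k Q ((u ^ (w ⬝ᵥ lam) : kˣ) : k)) :
    ψ = (Algebra.ofId k Q).comp (evalAt fun a => u ^ lam a) :=
  algHom_ext (fun h => by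
    rw [apply_single_eq_of_relator hu hψ hlam hsep hw h, AlgHom.comp_apply,
      evalAt_single_one_zpow, Algebra.ofId_apply]) (Subsingleton.elim _ _)

lemma relatorIdeal_le_ker_evalAt (hlam : lam ∈ D) :
    relatorIdeal u D ≤ RingHom.ker (evalAt fun a => u ^ lam a) := by
  refine Ideal.span_le.2 ?_
  rintro _ ⟨h, rfl⟩
  rw [SetLike.mem_coe, RingHom.mem_ker, relator, map_prod]
  refine prod_eq_zero hlam ?_
  rw [map_sub, AlgHom.commutes, evalAt_single_one_zpow, Algebra.algebraMap_self, RingHom.id_apply,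
    sub_self]

lemma mem_relatorIdeal_of_forall_evalAt_eq_zero (hu : ¬IsOfFinOrder u)
    {f : AddMonoidAlgebra k (Fin n → ℤ)} (hf : ∀ lam ∈ D, evalAt (fun a => u ^ lam a) f = 0) :
    f ∈ relatorIdeal u D := by
  obtain ⟨w, hw⟩ := exists_injOn_dotProduct D
  set π := Ideal.Quotient.mkₐ k (relatorIdeal u D)
  set A := algebraMap k (AddMonoidAlgebra k (Fin n → ℤ) ⧸ relatorIdeal u D)
  set t := π (single w 1)
  have hπ (h : Fin n → ℤ) : π (relator u D h) = 0 :=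
    Ideal.Quotient.eq_zero_iff_mem.2 (Ideal.subset_span ⟨h, rfl⟩)
  have hlocal : ∀ lam ∈ D, π f ∈ Ideal.span {t - A ((u ^ (w ⬝ᵥ lam) : kˣ) : k)} := by
    intro lam hlam
    set J := Ideal.span {t - A ((u ^ (w ⬝ᵥ lam) : kˣ) : k)}
    have hρ := eq_comp_evalAt_of_relator (Q := _ ⧸ J) (ψ := (Ideal.Quotient.mkₐ k J).comp π) hu
      (fun h => by rw [AlgHom.comp_apply, hπ, map_zero]) hlam
      (fun ν hν hne => hw.ne hν hlam hne)
      (by rw [AlgHom.comp_apply, ← AlgHom.commutes (Ideal.Quotient.mkₐ k J),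
        Ideal.Quotient.mkₐ_eq_mk, Ideal.Quotient.mkₐ_eq_mk, Ideal.Quotient.eq]
          exact Ideal.mem_span_singleton_self _)
    have := AlgHom.congr_fun hρ f
    rwa [AlgHom.comp_apply, AlgHom.comp_apply, hf lam hlam, map_zero, Ideal.Quotient.mkₐ_eq_mk,
      Ideal.Quotient.eq_zero_iff_mem] at this
  have hcop : Set.Pairwise (D : Set (Fin n → ℤ)) fun lam mu =>
      IsCoprime (t - A ((u ^ (w ⬝ᵥ lam) : kˣ) : k)) (t - A ((u ^ (w ⬝ᵥ mu) : kˣ) : k)) :=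
    fun lam hlam mu hmu hne => isCoprime_sub_algebraMap t
      ((injective_val_zpow hu).ne (hw.ne hlam hmu hne))
  have hprod : ∏ lam ∈ D, (t - A ((u ^ (w ⬝ᵥ lam) : kˣ) : k)) = 0 := by
    simpa only [relator, map_prod, map_sub, AlgHom.commutes] using hπ w
  have := Submodule.mem_finsetInf.2 hlocal
  rw [Ideal.finset_inf_span_singleton D _ hcop, hprod, Ideal.span_singleton_eq_bot.2 rfl,
    Ideal.mem_bot, Ideal.Quotient.mkₐ_eq_mk, Ideal.Quotient.eq_zero_iff_mem] at this
  exact this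

theorem mem_relatorIdeal_iff (hu : ¬IsOfFinOrder u) (f : AddMonoidAlgebra k (Fin n → ℤ)) :
    f ∈ relatorIdeal u D ↔ ∀ lam ∈ D, evalAt (fun a => u ^ lam a) f = 0 :=
  ⟨fun hf _ hlam => relatorIdeal_le_ker_evalAt hlam hf,
    mem_relatorIdeal_of_forall_evalAt_eq_zero hu⟩

end LaurentEval

end

open LaurentEval in
theorem stmt3_general (n : ℕ) (D : Finset (Fin n → ℤ))
    (f : AddMonoidAlgebra (RatFunc ℚ) (Fin n → ℤ)) :
    (∀ lam ∈ D,
      (Finsupp.sum f.coeff fun h c =>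
        c * ∏ a, ((RatFunc.X : RatFunc ℚ) ^ (lam a : ℤ)) ^ (h a : ℤ)) = 0) ↔
      f ∈ Ideal.span (Set.range fun h : Fin n → ℤ =>
        ∏ lam ∈ D,
          (AddMonoidAlgebra.single h (1 : RatFunc ℚ) -
            AddMonoidAlgebra.single 0
              ((RatFunc.X : RatFunc ℚ) ^ (∑ a, h a * lam a : ℤ)))) := by
  set v : (RatFunc ℚ)ˣ := Units.mk0 RatFunc.X RatFunc.X_ne_zero
  have hv : ¬IsOfFinOrder v := by
    rw [isOfFinOrder_iff_pow_eq_one]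
    rintro ⟨m, hm, hvm⟩
    have hX : (Polynomial.X : Polynomial ℚ) ^ m = 1 := RatFunc.algebraMap_injective ℚ <| by
      simpa [v, Units.ext_iff, RatFunc.algebraMap_X] using hvm
    simpa [hm.ne'] using congrArg Polynomial.natDegree hX
  convert (mem_relatorIdeal_iff (D := D) hv f).symm using 4 with lam
  · simp [evalAt_apply, v, Units.val_zpow_eq_zpow_val]
  · refine congrArg (Ideal.span ∘ Set.range) (funext fun h => ?_)
    simp [relator, v, Units.val_zpow_eq_zpow_val, dotProduct, coe_algebraMap]

/-- Let `D ⊂ ℤ^n` be finite and `p_λ = (v^{λ_1},…,v^{λ_n})` for `λ ∈ D`.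
In the Laurent polynomial ring `L = ℚ(v)[K₁^{±1},…,Kₙ^{±1}]` (the group algebra of `ℤ^n`
over `ℚ(v)`), the kernel of the evaluation map `φ : L → ∏_{λ ∈ D} ℚ(v)` (whose `λ`-th
component sends `K_h ↦ ∏ a, (v^{λ_a})^(h_a)`) equals the ideal generated by the elements
`F_h = ∏_{λ ∈ D} (K_h − v^{⟨h,λ⟩})` for `h ∈ ℤ^n`. -/
theorem stmt3 (n : ℕ) (hn : 1 ≤ n) (D : Finset (Fin n → ℤ))
    (f : AddMonoidAlgebra (RatFunc ℚ) (Fin n → ℤ)) :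
    (∀ lam ∈ D,
      (Finsupp.sum f.coeff fun h c =>
        c * ∏ a, ((RatFunc.X : RatFunc ℚ) ^ (lam a : ℤ)) ^ (h a : ℤ)) = 0) ↔
      f ∈ Ideal.span (Set.range fun h : Fin n → ℤ =>
        ∏ lam ∈ D,
          (AddMonoidAlgebra.single h (1 : RatFunc ℚ) -
            AddMonoidAlgebra.single 0
              ((RatFunc.X : RatFunc ℚ) ^ (∑ a, h a * lam a : ℤ)))) :=
  stmt3_general n D f
end

section
/- Let n ≥ 1 and let D ⊂ ℤ^n be a finite set. For λ ∈ D let p_λ = (v^{λ_1},…,v^{λ_n}) ∈ ℚ(v)^n. For h ∈ ℤ^n write h = h⁺ − h⁻ with h⁺, h⁻ ∈ ℕ^n the coordinatewise positive and negative parts, and set G_h = ∏_{λ∈D} (X^{h⁺} − v^{⟨h,λ⟩} X^{h⁻}) ∈ ℚ(v)[X_1,…,X_n], where X^m denotes the monomial X_1^{m_1}⋯X_n^{m_n} for m ∈ ℕ^n. Then the vanishing ideal in ℚ(v)[X_1,…,X_n] of the finite point set {p_λ : λ ∈ D} equals the ideal generated by {G_h : h ∈ ℤ^n}. -/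
/-! Modulo the ideal `I` spanned by the `G_h`, every variable `X_a` becomes a unit, since the
constant term of `G_{e_a} = ∏_λ (X_a - v^{λ_a})` is a nonzero scalar. The `G_h` then become the
relations `∏_λ (X^h - v^{⟨h,λ⟩}) = 0` between Laurent monomials. For `h₀` separating the points
of `D`, the element `Y = X^{h₀}` is a root of a polynomial with the simple roots `v^{⟨h₀,λ⟩}`, so
`K[X] ⧸ I` embeds into the product of its quotients by the `Y - v^{⟨h₀,ν⟩}`. In the quotient
indexed by `ν`, the relations for `h = e_a + t h₀` and two well-chosen values of `t` have the
single common root `v^{ν_a}`, which forces `X_a = v^{ν_a}`. So a polynomial vanishing on the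
points vanishes in every factor, hence lies in `I`. -/

theorem RatFunc.intDegree_X_zpow {F : Type*} [Field F] (k : ℤ) :
    (RatFunc.X ^ k : RatFunc F).intDegree = k := by
  have hnat : ∀ m : ℕ, (RatFunc.X ^ m : RatFunc F).intDegree = m := by
    intro m
    induction m with
    | zero => simp
    | succ m ih =>
      rw [pow_succ, intDegree_mul (pow_ne_zero _ X_ne_zero) X_ne_zero, ih, intDegree_X]
      push_cast; rfl
  cases k with
  | ofNat m => simpa using hnat m
  | negSucc m => rw [zpow_negSucc, intDegree_inv, hnat]; rfl

theorem RatFunc.X_zpow_injective {F : Type*} [Field F] :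
    Function.Injective fun k : ℤ => (RatFunc.X : RatFunc F) ^ k := fun j k h => by
  simpa only [intDegree_X_zpow] using congrArg intDegree h

theorem ne_zero_of_injective_zpow {G₀ : Type*} [GroupWithZero G₀] {v : G₀}
    (hv : Function.Injective fun k : ℤ => v ^ k) : v ≠ 0 := by
  rintro rfl
  exact absurd (@hv 1 (-1) (by simp)) (by decide)

theorem MvPolynomial.exists_forall_eval_ne_zero {R σ ι : Type*} [CommRing R] [IsDomain R]
    [Infinite R] (s : Finset ι) (p : ι → MvPolynomial σ R) (hp : ∀ i ∈ s, p i ≠ 0) :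
    ∃ x : σ → R, ∀ i ∈ s, eval x (p i) ≠ 0 := by
  by_contra! H
  refine Finset.prod_ne_zero_iff.2 hp (funext fun x => ?_)
  obtain ⟨i, hi, hx⟩ := H x
  rw [map_prod, map_zero, Finset.prod_eq_zero hi hx]

theorem exists_injOn_dotProduct {σ : Type*} [Fintype σ] (D : Finset (σ → ℤ)) :
    ∃ h : σ → ℤ, Set.InjOn (h ⬝ᵥ ·) D := by
  classical
  let form : (σ → ℤ) × (σ → ℤ) → MvPolynomial σ ℤ :=
    fun p => ∑ a, MvPolynomial.X a * MvPolynomial.C (p.1 a - p.2 a)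
  have heval : ∀ h p, MvPolynomial.eval h (form p) = h ⬝ᵥ p.1 - h ⬝ᵥ p.2 := by
    simp [form, dotProduct, mul_sub]
  obtain ⟨h, hh⟩ := MvPolynomial.exists_forall_eval_ne_zero D.offDiag form fun p hp hzero => by
    obtain ⟨-, -, hne⟩ := Finset.mem_offDiag.1 hp
    refine hne (funext fun a => ?_)
    simpa [heval, sub_eq_zero] using congrArg (MvPolynomial.eval (Pi.single a 1)) hzero
  refine ⟨h, fun lam hlam mu hmu heq => by_contra fun hne => ?_⟩
  refine hh (lam, mu) (Finset.mem_offDiag.2 ⟨hlam, hmu, hne⟩) ?_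
  rw [heval]
  exact sub_eq_zero.2 heq

theorem Int.exists_forall_add_mul_ne_zero {ι : Type*} (s : Finset ι) (a b : ι → ℤ)
    (hb : ∀ i ∈ s, b i ≠ 0) : ∃ t : ℤ, ∀ i ∈ s, a i + t * b i ≠ 0 := by
  obtain ⟨t, ht⟩ := (s.image fun i => -a i / b i).exists_notMem
  refine ⟨t, fun i hi h => ht (Finset.mem_image.2 ⟨i, hi, ?_⟩)⟩
  exact Int.ediv_eq_of_eq_mul_left (hb i hi) (by linarith)

namespace Polynomial

variable {R A : Type*} [CommRing R] [CommRing A] [Algebra R A]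

theorem aeval_eq_zero_of_isCoprime {x : A} {r p q : R[X]} (hpq : IsCoprime p q)
    (hp : aeval x (r * p) = 0) (hq : aeval x (r * q) = 0) : aeval x r = 0 := by
  obtain ⟨γ, δ, hγδ⟩ := hpq
  have hr : r = γ * (r * p) + δ * (r * q) := by linear_combination -r * hγδ
  rw [hr, map_add, map_mul _ γ, map_mul _ δ, hp, hq, mul_zero, mul_zero, add_zero]

theorem isUnit_of_aeval_eq_zero {x : A} {p : R[X]} (hp : aeval x p = 0)
    (h0 : IsUnit (p.coeff 0)) : IsUnit x := by
  have h := congrArg (aeval x) (X_mul_divX_add p)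
  rw [map_add, map_mul, aeval_X, aeval_C, hp] at h
  have hx : x * -aeval x p.divX = algebraMap R A (p.coeff 0) := by linear_combination -h
  exact isUnit_of_mul_isUnit_left (hx ▸ h0.map _)

end Polynomial

theorem Units.val_zpow_eq_algebraMap {K A : Type*} [Field K] [CommRing A] [Algebra K A]
    {Y : Aˣ} {c : K} (hc : c ≠ 0) (hY : (Y : A) = algebraMap K A c) (t : ℤ) :
    ((Y ^ t : Aˣ) : A) = algebraMap K A (c ^ t) := by
  obtain rfl : Y = Units.map (algebraMap K A : K →* A) (Units.mk0 c hc) := Units.ext hY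
  rw [← map_zpow, Units.coe_map, Units.val_zpow_eq_zpow_val, Units.val_mk0]
  rfl

section LaurentMonomial

variable {σ G H : Type*} [Fintype σ] [CommGroup G] [CommGroup H]

def laurentMonomial (u : σ → G) (h : σ → ℤ) : G := ∏ a, u a ^ h a

theorem laurentMonomial_add (u : σ → G) (h h' : σ → ℤ) :
    laurentMonomial u (h + h') = laurentMonomial u h * laurentMonomial u h' := by
  simp only [laurentMonomial, Pi.add_apply, zpow_add, Finset.prod_mul_distrib]

theorem laurentMonomial_zsmul (u : σ → G) (t : ℤ) (h : σ → ℤ) :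
    laurentMonomial u (t • h) = laurentMonomial u h ^ t := by
  simp only [laurentMonomial, Pi.smul_apply, smul_eq_mul, mul_comm t, zpow_mul, Finset.prod_zpow]

theorem laurentMonomial_single [DecidableEq σ] (u : σ → G) (a : σ) :
    laurentMonomial u (Pi.single a 1) = u a := by
  simp [laurentMonomial, Pi.single_apply]

theorem map_laurentMonomial (φ : G →* H) (u : σ → G) (h : σ → ℤ) :
    φ (laurentMonomial u h) = laurentMonomial (fun a => φ (u a)) h := by
  simp only [laurentMonomial, map_prod, map_zpow]

theorem laurentMonomial_zpow (g : G) (lam h : σ → ℤ) :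
    laurentMonomial (fun a => g ^ lam a) h = g ^ (h ⬝ᵥ lam) := by
  simp only [laurentMonomial, dotProduct, ← zpow_mul, mul_comm (lam _)]
  induction (Finset.univ : Finset σ) using Finset.cons_induction with
  | empty => simp
  | cons a s ha ih => rw [Finset.prod_cons, Finset.sum_cons, ih, zpow_add]

end LaurentMonomial

section BinomialRelations

open Polynomial

variable {K σ A B : Type*} [Field K] [Fintype σ] [CommRing A] [Algebra K A] [CommRing B]
  [Algebra K B] {v : K} {D : Finset (σ → ℤ)} {u : σ → Aˣ}

def BinomialRelations (v : K) (D : Finset (σ → ℤ)) (u : σ → Aˣ) : Prop :=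
  ∀ h : σ → ℤ, ∏ lam ∈ D, (((laurentMonomial u h : Aˣ) : A) - algebraMap K A (v ^ (h ⬝ᵥ lam))) = 0

theorem BinomialRelations.map (hu : BinomialRelations v D u) (φ : A →ₐ[K] B) :
    BinomialRelations v D fun a => Units.map (φ : A →* B) (u a) := by
  intro h
  simpa only [← map_laurentMonomial, Units.coe_map, MonoidHom.coe_coe, map_prod, map_sub,
    AlgHom.commutes, map_zero] using congrArg φ (hu h)

theorem BinomialRelations.aeval_prod_eq_zero (hv0 : v ≠ 0) (hu : BinomialRelations v D u)
    {h₀ ν : σ → ℤ} (hY : ((laurentMonomial u h₀ : Aˣ) : A) = algebraMap K A (v ^ (h₀ ⬝ᵥ ν)))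
    (a : σ) (t : ℤ) :
    aeval (u a : A) (∏ mu ∈ D, (X - C (v ^ (mu a + t * (h₀ ⬝ᵥ mu - h₀ ⬝ᵥ ν))))) = 0 := by
  classical
  set c := v ^ (h₀ ⬝ᵥ ν)
  have hct : IsUnit (algebraMap K A (c ^ t)) :=
    (IsUnit.mk0 _ (zpow_ne_zero _ (zpow_ne_zero _ hv0))).map _
  have hfactor : ∀ mu, ((laurentMonomial u (Pi.single a 1 + t • h₀) : Aˣ) : A) -
      algebraMap K A (v ^ ((Pi.single a 1 + t • h₀) ⬝ᵥ mu)) =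
      algebraMap K A (c ^ t) *
        ((u a : A) - algebraMap K A (v ^ (mu a + t * (h₀ ⬝ᵥ mu - h₀ ⬝ᵥ ν)))) := by
    intro mu
    have hexp : v ^ ((Pi.single a 1 + t • h₀) ⬝ᵥ mu) =
        c ^ t * v ^ (mu a + t * (h₀ ⬝ᵥ mu - h₀ ⬝ᵥ ν)) := by
      rw [← zpow_mul, ← zpow_add₀ hv0, add_dotProduct, single_dotProduct, smul_dotProduct,
        smul_eq_mul]
      ring_nf
    rw [laurentMonomial_add, laurentMonomial_single, laurentMonomial_zsmul, Units.val_mul,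
      Units.val_zpow_eq_algebraMap (zpow_ne_zero _ hv0) hY, hexp, map_mul]
    ring
  have hrel := hu (Pi.single a 1 + t • h₀)
  rw [Finset.prod_congr rfl fun mu _ => hfactor mu, Finset.prod_mul_distrib, Finset.prod_const,
    (hct.pow _).mul_right_eq_zero] at hrel
  simpa only [map_prod, map_sub, aeval_X, aeval_C] using hrel

theorem BinomialRelations.coe_eq_algebraMap (hv : Function.Injective fun k : ℤ => v ^ k)
    (hu : BinomialRelations v D u) {h₀ ν : σ → ℤ} (hsep : Set.InjOn (h₀ ⬝ᵥ ·) D) (hν : ν ∈ D)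
    (hY : ((laurentMonomial u h₀ : Aˣ) : A) = algebraMap K A (v ^ (h₀ ⬝ᵥ ν))) (a : σ) :
    (u a : A) = algebraMap K A (v ^ ν a) := by
  have hv0 := ne_zero_of_injective_zpow hv
  -- `root t ν = v ^ ν a` for every `t`, while the other roots move with `t`
  let root (t : ℤ) (mu : σ → ℤ) : K := v ^ (mu a + t * (h₀ ⬝ᵥ mu - h₀ ⬝ᵥ ν))
  let others (t : ℤ) : K[X] := ∏ mu ∈ D.erase ν, (X - C (root t mu))
  have hQ : ∀ t, aeval (u a : A) ((X - C (v ^ ν a)) * others t) = 0 := by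
    intro t
    have hroot : root t ν = v ^ ν a := by simp [root]
    rw [← hroot, Finset.mul_prod_erase _ (fun mu => X - C (root t mu)) hν]
    exact hu.aeval_prod_eq_zero hv0 hY a t
  obtain ⟨t, ht⟩ := Int.exists_forall_add_mul_ne_zero ((D.erase ν) ×ˢ (D.erase ν))
    (fun p => p.1 a - p.2 a) (fun p => h₀ ⬝ᵥ p.1 - h₀ ⬝ᵥ ν) fun p hp => by
      obtain ⟨hp₁, -⟩ := Finset.mem_product.1 hp
      exact sub_ne_zero.2 (hsep.ne (Finset.mem_of_mem_erase hp₁) hν (Finset.ne_of_mem_erase hp₁))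
  have hcop : IsCoprime (others t) (others 0) :=
    IsCoprime.prod_left fun mu hmu => IsCoprime.prod_right fun mu' hmu' =>
      isCoprime_X_sub_C_of_isUnit_sub <| IsUnit.mk0 _ <| sub_ne_zero.2 fun h =>
        ht (mu, mu') (Finset.mem_product.2 ⟨hmu, hmu'⟩) (by linarith [hv h])
  have hlin := aeval_eq_zero_of_isCoprime hcop (hQ t) (hQ 0)
  rwa [map_sub, aeval_X, aeval_C, sub_eq_zero] at hlin

theorem BinomialRelations.sub_algebraMap_dvd_aeval (hv : Function.Injective fun k : ℤ => v ^ k)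
    (hu : BinomialRelations v D u) {h₀ ν : σ → ℤ} (hsep : Set.InjOn (h₀ ⬝ᵥ ·) D) (hν : ν ∈ D)
    {f : MvPolynomial σ K} (hf : MvPolynomial.eval (fun a => v ^ ν a) f = 0) :
    ((laurentMonomial u h₀ : Aˣ) : A) - algebraMap K A (v ^ (h₀ ⬝ᵥ ν)) ∣
      MvPolynomial.aeval (fun a => (u a : A)) f := by
  set J := Ideal.span {((laurentMonomial u h₀ : Aˣ) : A) - algebraMap K A (v ^ (h₀ ⬝ᵥ ν))}
  let π : A →ₐ[K] A ⧸ J := Ideal.Quotient.mkₐ K J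
  have hY : ((laurentMonomial (fun a => Units.map (π : A →* A ⧸ J) (u a)) h₀ : (A ⧸ J)ˣ) :
      A ⧸ J) = algebraMap K _ (v ^ (h₀ ⬝ᵥ ν)) := by
    rw [← map_laurentMonomial, Units.coe_map, MonoidHom.coe_coe, ← sub_eq_zero,
      ← AlgHom.commutes π, ← map_sub]
    exact Ideal.Quotient.eq_zero_iff_mem.2 (Ideal.mem_span_singleton_self _)
  have hπu : π ∘ (fun a => (u a : A)) = algebraMap K (A ⧸ J) ∘ fun a => v ^ ν a :=
    funext ((hu.map π).coe_eq_algebraMap hv hsep hν hY)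
  rw [← Ideal.mem_span_singleton, ← Ideal.Quotient.eq_zero_iff_mem]
  change π _ = 0
  rw [MvPolynomial.comp_aeval_apply]
  change MvPolynomial.aeval (π ∘ _) f = 0
  rw [hπu, MvPolynomial.aeval_algebraMap_apply, MvPolynomial.aeval_eq_eval, hf, map_zero]

theorem BinomialRelations.aeval_eq_zero (hv : Function.Injective fun k : ℤ => v ^ k)
    (hu : BinomialRelations v D u) {f : MvPolynomial σ K}
    (hf : ∀ lam ∈ D, MvPolynomial.eval (fun a => v ^ lam a) f = 0) :
    MvPolynomial.aeval (fun a => (u a : A)) f = 0 := by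
  obtain ⟨h₀, hsep⟩ := exists_injOn_dotProduct D
  set Y : A := ((laurentMonomial u h₀ : Aˣ) : A)
  have hcop : (D : Set (σ → ℤ)).Pairwise
      (Function.onFun IsCoprime fun ν => Y - algebraMap K A (v ^ (h₀ ⬝ᵥ ν))) := by
    intro μ hμ ν hν hne
    have hc := isCoprime_X_sub_C_of_isUnit_sub
      (IsUnit.mk0 _ (sub_ne_zero.2 ((hv.comp_injOn hsep).ne hμ hν hne)))
    simpa using hc.map (aeval Y).toRingHom
  have hdvd := Finset.prod_dvd_of_coprime hcop fun ν hν =>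
    hu.sub_algebraMap_dvd_aeval hv hsep hν (hf ν hν)
  rwa [hu h₀, zero_dvd_iff] at hdvd

end BinomialRelations

section BinomialProd

variable {K σ B : Type*} [Field K] [Fintype σ] [CommRing B] [Algebra K B] {v : K}
  {D : Finset (σ → ℤ)}

noncomputable def binomialProd (v : K) (D : Finset (σ → ℤ)) (h : σ → ℤ) : MvPolynomial σ K :=
  ∏ lam ∈ D, ((∏ a, MvPolynomial.X a ^ (h a).toNat) -
    MvPolynomial.C (v ^ (h ⬝ᵥ lam)) * ∏ a, MvPolynomial.X a ^ (-(h a)).toNat)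

theorem binomialProd_single [DecidableEq σ] (a : σ) :
    binomialProd v D (Pi.single a 1) =
      ∏ lam ∈ D, (MvPolynomial.X a - MvPolynomial.C (v ^ lam a)) := by
  refine Finset.prod_congr rfl fun lam _ => ?_
  simp [Pi.single_apply, single_dotProduct, apply_ite, Finset.prod_ite_eq']

theorem coe_laurentMonomial_mul_prod_pow (x : σ → Bˣ) (h : σ → ℤ) :
    ((laurentMonomial x h : Bˣ) : B) * ∏ a, (x a : B) ^ (-(h a)).toNat =
      ∏ a, (x a : B) ^ (h a).toNat := by
  rw [laurentMonomial, Units.coe_prod, ← Finset.prod_mul_distrib]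
  refine Finset.prod_congr rfl fun a _ => ?_
  rw [← Units.val_pow_eq_pow_val, ← Units.val_pow_eq_pow_val, ← Units.val_mul, ← zpow_natCast,
    ← zpow_natCast, ← zpow_add]
  congr 2
  omega

theorem aeval_binomialProd (x : σ → Bˣ) (h : σ → ℤ) :
    MvPolynomial.aeval (fun a => (x a : B)) (binomialProd v D h) =
      (∏ a, (x a : B) ^ (-(h a)).toNat) ^ D.card *
        ∏ lam ∈ D, (((laurentMonomial x h : Bˣ) : B) - algebraMap K B (v ^ (h ⬝ᵥ lam))) := by
  rw [binomialProd, map_prod, ← Finset.prod_const, ← Finset.prod_mul_distrib]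
  refine Finset.prod_congr rfl fun lam _ => ?_
  simp only [map_sub, map_mul, map_prod, map_pow, MvPolynomial.aeval_X, MvPolynomial.aeval_C,
    ← coe_laurentMonomial_mul_prod_pow x h]
  ring

theorem binomialRelations_iff (x : σ → Bˣ) :
    BinomialRelations v D x ↔
      ∀ h, MvPolynomial.aeval (fun a => (x a : B)) (binomialProd v D h) = 0 := by
  refine forall_congr' fun h => ?_
  have hunit : IsUnit ((∏ a, (x a : B) ^ (-(h a)).toNat) ^ D.card) :=
    (IsUnit.prod_univ_iff.2 fun a => (x a).isUnit.pow _).pow _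
  rw [aeval_binomialProd, hunit.mul_right_eq_zero]

theorem isUnit_of_forall_aeval_binomialProd_eq_zero (hv0 : v ≠ 0) {x : σ → B}
    (hx : ∀ h, MvPolynomial.aeval x (binomialProd v D h) = 0) (a : σ) : IsUnit (x a) := by
  classical
  refine Polynomial.isUnit_of_aeval_eq_zero
    (p := ∏ lam ∈ D, (Polynomial.X - Polynomial.C (v ^ lam a))) ?_ ?_
  · simpa [binomialProd_single, map_prod] using hx (Pi.single a 1)
  · rw [Polynomial.coeff_zero_eq_eval_zero, Polynomial.eval_prod]
    exact IsUnit.mk0 _ (Finset.prod_ne_zero_iff.2 fun lam _ => by simpa using zpow_ne_zero _ hv0)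

theorem binomialRelations_zpow (hv0 : v ≠ 0) {lam : σ → ℤ} (hlam : lam ∈ D) :
    BinomialRelations v D fun a => Units.mk0 v hv0 ^ lam a := by
  intro h
  refine Finset.prod_eq_zero hlam ?_
  rw [laurentMonomial_zpow, Units.val_zpow_eq_zpow_val, Units.val_mk0, Algebra.algebraMap_self,
    RingHom.id_apply, sub_self]

end BinomialProd

theorem vanishingIdeal_image_zpow_eq_span_binomialProd {K σ : Type*} [Field K] [Fintype σ]
    {v : K} (hv : Function.Injective fun k : ℤ => v ^ k) (D : Finset (σ → ℤ)) :
    MvPolynomial.vanishingIdeal K ((fun lam a => v ^ lam a) '' (D : Set (σ → ℤ))) =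
      Ideal.span (Set.range (binomialProd v D)) := by
  have hv0 := ne_zero_of_injective_zpow hv
  refine le_antisymm (fun f hf => ?_) (Ideal.span_le.2 ?_)
  · set I := Ideal.span (Set.range (binomialProd v D))
    let π := Ideal.Quotient.mkₐ K I
    have hπ : ∀ h, MvPolynomial.aeval (π ∘ MvPolynomial.X) (binomialProd v D h) = 0 := fun h => by
      rw [← MvPolynomial.aeval_unique]
      exact Ideal.Quotient.eq_zero_iff_mem.2 (Ideal.subset_span ⟨h, rfl⟩)
    have hunit := isUnit_of_forall_aeval_binomialProd_eq_zero hv0 hπ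
    have hx : (fun a => ((hunit a).unit : MvPolynomial σ K ⧸ I)) = π ∘ MvPolynomial.X :=
      funext fun a => (hunit a).unit_spec
    have hrel : BinomialRelations v D fun a => (hunit a).unit :=
      (binomialRelations_iff _).2 (by rwa [hx])
    have hπf := hrel.aeval_eq_zero hv fun lam hlam =>
      MvPolynomial.mem_vanishingIdeal_iff.1 hf _ ⟨lam, hlam, rfl⟩
    rw [hx, ← MvPolynomial.aeval_unique] at hπf
    exact Ideal.Quotient.eq_zero_iff_mem.1 hπf
  · rintro _ ⟨h, rfl⟩
    rw [SetLike.mem_coe, MvPolynomial.mem_vanishingIdeal_iff]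
    rintro _ ⟨lam, hlam, rfl⟩
    have hG := (binomialRelations_iff _).1 (binomialRelations_zpow hv0 hlam) h
    simpa [Units.val_zpow_eq_zpow_val, MvPolynomial.aeval_eq_eval] using hG

theorem stmt4_general (n : ℕ) (D : Finset (Fin n → ℤ)) :
    MvPolynomial.vanishingIdeal (RatFunc ℚ)
        ((fun lam : Fin n → ℤ => fun a : Fin n => (RatFunc.X : RatFunc ℚ) ^ (lam a : ℤ)) ''
          (↑D : Set (Fin n → ℤ))) =
      Ideal.span (Set.range fun h : Fin n → ℤ =>
        ∏ lam ∈ D,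
          ((∏ a, MvPolynomial.X a ^ (h a).toNat) -
            MvPolynomial.C ((RatFunc.X : RatFunc ℚ) ^ (∑ a, h a * lam a : ℤ)) *
              ∏ a, MvPolynomial.X a ^ (-(h a)).toNat)) :=
  vanishingIdeal_image_zpow_eq_span_binomialProd RatFunc.X_zpow_injective D

/-- Let `D ⊂ ℤ^n` be finite and `p_λ = (v^{λ_1},…,v^{λ_n})` for `λ ∈ D`.
For `h ∈ ℤ^n` with positive/negative parts `h⁺, h⁻ ∈ ℕ^n`, set
`G_h = ∏_{λ ∈ D} (X^{h⁺} − v^{⟨h,λ⟩} X^{h⁻}) ∈ ℚ(v)[X₁,…,Xₙ]`.  Then the vanishing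
ideal of the point set `{p_λ : λ ∈ D}` equals the ideal generated by the `G_h`. -/
theorem stmt4 (n : ℕ) (hn : 1 ≤ n) (D : Finset (Fin n → ℤ)) :
    MvPolynomial.vanishingIdeal (RatFunc ℚ)
        ((fun lam : Fin n → ℤ => fun a : Fin n => (RatFunc.X : RatFunc ℚ) ^ (lam a : ℤ)) ''
          (↑D : Set (Fin n → ℤ))) =
      Ideal.span (Set.range fun h : Fin n → ℤ =>
        ∏ lam ∈ D,
          ((∏ a, MvPolynomial.X a ^ (h a).toNat) -
            MvPolynomial.C ((RatFunc.X : RatFunc ℚ) ^ (∑ a, h a * lam a : ℤ)) *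
              ∏ a, MvPolynomial.X a ^ (-(h a)).toNat)) :=
  stmt4_general n D
end

section
/- Let n ≥ 1, let D ⊂ ℤ^n be a finite set, and let Δ′ be the ideal of ℚ(v)[X_1,…,X_n] generated by the elements G_h = ∏_{λ∈D} (X^{h⁺} − v^{⟨h,λ⟩} X^{h⁻}) for h ∈ ℤ^n (h⁺, h⁻ the coordinatewise positive and negative parts of h). Fix λ ∈ D, let p_λ = (v^{λ_1},…,v^{λ_n}) ∈ ℚ(v)^n, and let 𝔪_λ be the kernel of the evaluation homomorphism ℚ(v)[X_1,…,X_n] → ℚ(v) at p_λ (a maximal ideal). Then the quotient of the localization of ℚ(v)[X_1,…,X_n] at the prime 𝔪_λ by the ideal generated by the image of Δ′ is a field (in particular, it is a regular local ring). -/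
open MvPolynomial

-- injectivity of integer powers of RatFunc.X
lemma aux_Xpow_natCast_eq_one {c : ℕ} (h : (RatFunc.X : RatFunc ℚ) ^ c = 1) : c = 0 := by
  have h2 : (algebraMap (Polynomial ℚ) (RatFunc ℚ)) (Polynomial.X ^ c) =
      (algebraMap (Polynomial ℚ) (RatFunc ℚ)) 1 := by
    rw [map_pow, map_one, RatFunc.algebraMap_X, h]
  have h3 : (Polynomial.X : Polynomial ℚ) ^ c = 1 := RatFunc.algebraMap_injective ℚ h2
  have := congrArg Polynomial.natDegree h3
  simpa using this

lemma aux_zpow_inj {a b : ℤ} (h : (RatFunc.X : RatFunc ℚ) ^ a = RatFunc.X ^ b) : a = b := by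
  have hX : (RatFunc.X : RatFunc ℚ) ≠ 0 := RatFunc.X_ne_zero
  have key : ∀ c : ℤ, (RatFunc.X : RatFunc ℚ) ^ c = 1 → c = 0 := by
    intro c hc
    rcases le_total 0 c with hc0 | hc0
    · have : (RatFunc.X : RatFunc ℚ) ^ c.toNat = 1 := by
        rw [← zpow_natCast, Int.toNat_of_nonneg hc0, hc]
      have := aux_Xpow_natCast_eq_one this
      omega
    · have : (RatFunc.X : RatFunc ℚ) ^ (-c) = 1 := by
        rw [zpow_neg, hc, inv_one]
      have : (RatFunc.X : RatFunc ℚ) ^ (-c).toNat = 1 := by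
        rw [← zpow_natCast, Int.toNat_of_nonneg (by omega), this]
      have := aux_Xpow_natCast_eq_one this
      omega
  have : (RatFunc.X : RatFunc ℚ) ^ (a - b) = 1 := by
    rw [zpow_sub₀ hX, h, div_self (zpow_ne_zero _ hX)]
  have := key _ this
  omega

lemma aux_zpow_sum {ι : Type*} (s : Finset ι) (f : ι → ℤ) :
    (RatFunc.X : RatFunc ℚ) ^ (∑ i ∈ s, f i) = ∏ i ∈ s, (RatFunc.X : RatFunc ℚ) ^ f i := by
  classical
  induction s using Finset.cons_induction with
  | empty => simp
  | cons a s ha ih =>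
    rw [Finset.sum_cons, Finset.prod_cons, zpow_add₀ RatFunc.X_ne_zero, ih]

-- f - C (eval p f) lies in span of (X a - C (p a))
lemma aux_sub_C_mem {n : ℕ} (p : Fin n → RatFunc ℚ) (f : MvPolynomial (Fin n) (RatFunc ℚ)) :
    f - C (eval p f) ∈ Ideal.span (Set.range fun a => (X a : MvPolynomial (Fin n) (RatFunc ℚ)) - C (p a)) := by
  induction f using MvPolynomial.induction_on with
  | C a => simp
  | add f g hf hg =>
    have := Ideal.add_mem _ hf hg
    have heq : f + g - C (eval p (f + g)) = (f - C (eval p f)) + (g - C (eval p g)) := by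
      rw [map_add, map_add]; ring
    rw [heq]; exact this
  | mul_X f a hf =>
    have heq : f * X a - C (eval p (f * X a)) =
        f * ((X a : MvPolynomial (Fin n) (RatFunc ℚ)) - C (p a)) + C (p a) * (f - C (eval p f)) := by
      rw [map_mul, eval_X, map_mul]; ring
    rw [heq]
    exact Ideal.add_mem _ (Ideal.mul_mem_left _ _ (Ideal.subset_span ⟨a, rfl⟩))
      (Ideal.mul_mem_left _ _ hf)


-- existence of a positive integer vector not orthogonal to any member of a finite set of nonzero vectors
lemma aux_generic {n : ℕ} (S : Finset (Fin n → ℤ)) (hS : ∀ μ ∈ S, μ ≠ 0) :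
    ∃ g : Fin n → ℕ, ∀ μ ∈ S, (∑ i, (g i : ℤ) * μ i) ≠ 0 := by
  classical
  set Q : Polynomial ℚ :=
    ∏ μ ∈ S, (∑ i : Fin n, Polynomial.C ((μ i : ℚ)) * Polynomial.X ^ (i : ℕ)) with hQ
  have hQ0 : Q ≠ 0 := by
    rw [hQ]
    apply Finset.prod_ne_zero_iff.mpr
    intro μ hμ
    have hμ0 := hS μ hμ
    obtain ⟨j, hj⟩ : ∃ j, μ j ≠ 0 := by
      by_contra hcon
      push_neg at hcon
      exact hμ0 (funext hcon)
    intro hzero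
    have := congrArg (Polynomial.coeff · (j : ℕ)) hzero
    simp only [Polynomial.finset_sum_coeff, Polynomial.coeff_C_mul, Polynomial.coeff_X_pow,
      Polynomial.coeff_zero] at this
    rw [Finset.sum_eq_single j] at this
    · simp at this
      exact hj (by exact_mod_cast this)
    · intro b _ hb
      have hne : (j : ℕ) ≠ (b : ℕ) := fun h => hb (Fin.val_injective h.symm)
      simp [hne]
    · simp
  have hfin : {N : ℕ | Polynomial.IsRoot Q (N : ℚ)}.Finite := by
    exact Set.Finite.preimage (Set.injOn_of_injective Nat.cast_injective)
      (Polynomial.finite_setOf_isRoot hQ0)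
  obtain ⟨N, hN⟩ := hfin.infinite_compl.nonempty
  refine ⟨fun i => N ^ (i : ℕ), ?_⟩
  intro μ hμ
  have hev : Polynomial.eval (N : ℚ) Q ≠ 0 := hN
  rw [hQ, Polynomial.eval_prod] at hev
  have := Finset.prod_ne_zero_iff.mp hev μ hμ
  simp only [Polynomial.eval_finset_sum, Polynomial.eval_mul, Polynomial.eval_C,
    Polynomial.eval_pow, Polynomial.eval_X] at this
  intro hcon
  apply this
  have : ((∑ i : Fin n, ((N:ℤ) ^ (i:ℕ)) * μ i : ℤ) : ℚ) = 0 := by exact_mod_cast hcon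
  push_cast at this
  rw [← this]
  apply Finset.sum_congr rfl
  intro i _
  ring

/-- The kernel of evaluation of multivariate polynomials at a point of a field is a
prime (indeed maximal) ideal. -/
instance evalKer_isPrime (n : ℕ) (p : Fin n → RatFunc ℚ) :
    (RingHom.ker (MvPolynomial.eval p)).IsPrime :=
  RingHom.ker_isPrime _

/-- Let `D ⊂ ℤ^n` be finite and let `Δ′` be the ideal of
`ℚ(v)[X₁,…,Xₙ]` generated by the elements `G_h = ∏_{λ∈D} (X^{h⁺} − v^{⟨h,λ⟩} X^{h⁻})`
for `h ∈ ℤ^n`.  Fix `λ ∈ D`, let `p_λ = (v^{λ_1},…,v^{λ_n})` and let `𝔪_λ` be the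
kernel of evaluation at `p_λ`.  Then the quotient of the localization at `𝔪_λ` by the
ideal generated by the image of `Δ′` is a field. -/
theorem stmt6 (n : ℕ) (hn : 1 ≤ n) (D : Finset (Fin n → ℤ))
    (lam0 : Fin n → ℤ) (hlam0 : lam0 ∈ D) :
    IsField
      ((Localization.AtPrime
          (RingHom.ker (MvPolynomial.eval
            (fun a : Fin n => (RatFunc.X : RatFunc ℚ) ^ (lam0 a : ℤ))))) ⧸
        Ideal.map
          (algebraMap (MvPolynomial (Fin n) (RatFunc ℚ))
            (Localization.AtPrime
              (RingHom.ker (MvPolynomial.eval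
                (fun a : Fin n => (RatFunc.X : RatFunc ℚ) ^ (lam0 a : ℤ))))))
          (Ideal.span (Set.range fun h : Fin n → ℤ =>
            ∏ lam ∈ D,
              ((∏ a, MvPolynomial.X a ^ (h a).toNat) -
                MvPolynomial.C ((RatFunc.X : RatFunc ℚ) ^ (∑ a, h a * lam a : ℤ)) *
                  ∏ a, MvPolynomial.X a ^ (-(h a)).toNat)))) := by
  classical
  set v : RatFunc ℚ := RatFunc.X with hv
  set R := MvPolynomial (Fin n) (RatFunc ℚ) with hR
  set p : Fin n → RatFunc ℚ := fun a : Fin n => v ^ (lam0 a : ℤ) with hp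
  set m : Ideal R := RingHom.ker (MvPolynomial.eval p) with hm
  set L := Localization.AtPrime m with hL
  set φ := algebraMap R L with hφ
  set Gen : (Fin n → ℤ) → R := fun h : Fin n → ℤ =>
    ∏ lam ∈ D,
      ((∏ a, MvPolynomial.X a ^ (h a).toNat) -
        MvPolynomial.C (v ^ (∑ a, h a * lam a : ℤ)) *
          ∏ a, MvPolynomial.X a ^ (-(h a)).toNat) with hGen
  set I : Ideal L := Ideal.map φ (Ideal.span (Set.range Gen)) with hI
  -- evaluation of each generator vanishes
  have hspan_le_m : Ideal.span (Set.range Gen) ≤ m := by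
    rw [Ideal.span_le]
    rintro _ ⟨h, rfl⟩
    have : eval p (Gen h) = 0 := by
      rw [hGen]
      rw [map_prod]
      apply Finset.prod_eq_zero hlam0
      rw [map_sub, map_mul, map_prod, map_prod, eval_C]
      simp only [map_pow, eval_X]
      have e1 : ∀ a : Fin n, (p a) ^ (h a).toNat = v ^ (lam0 a * ((h a).toNat : ℤ)) := by
        intro a; rw [hp, ← zpow_natCast (v ^ (lam0 a)) ((h a).toNat), ← zpow_mul]
      have e2 : ∀ a : Fin n, (p a) ^ (-(h a)).toNat = v ^ (lam0 a * (((-(h a)).toNat : ℤ))) := by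
        intro a; rw [hp, ← zpow_natCast (v ^ (lam0 a)) ((-(h a)).toNat), ← zpow_mul]
      rw [Finset.prod_congr rfl (fun a _ => e1 a), Finset.prod_congr rfl (fun a _ => e2 a),
        ← aux_zpow_sum, ← aux_zpow_sum, ← zpow_add₀ RatFunc.X_ne_zero]
      rw [sub_eq_zero]
      congr 1
      rw [← Finset.sum_add_distrib]
      apply Finset.sum_congr rfl
      intro a _
      have hh : ((h a).toNat : ℤ) - ((-(h a)).toNat : ℤ) = h a := by omega
      linear_combination (lam0 a) * hh
    exact this
  -- main membership lemma
  have inI : ∀ hN : Fin n → ℕ,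
      (∀ lam ∈ D, lam ≠ lam0 → (∑ i, (hN i : ℤ) * lam i) ≠ ∑ i, (hN i : ℤ) * lam0 i) →
      φ ((∏ i, (X i : R) ^ hN i) - C (v ^ (∑ i, (hN i : ℤ) * lam0 i))) ∈ I := by
    intro hN hsep
    set M : R := ∏ i, (X i : R) ^ hN i with hM
    set f : (Fin n → ℤ) → R := fun lam => M - C (v ^ (∑ i, (hN i : ℤ) * lam i)) with hf
    have hGenEq : Gen (fun i => (hN i : ℤ)) = ∏ lam ∈ D, f lam := by
      rw [hGen]
      apply Finset.prod_congr rfl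
      intro lam _
      have t1 : ∀ i : Fin n, (((hN i : ℤ)).toNat) = hN i := fun i => by omega
      have t2 : ∀ i : Fin n, ((-(hN i : ℤ)).toNat) = 0 := fun i => by omega
      simp only [t1, t2, pow_zero, Finset.prod_const_one, mul_one, hf, hM]
    have hGI : φ (Gen (fun i => (hN i : ℤ))) ∈ I := by
      exact Ideal.mem_map_of_mem φ (Ideal.subset_span ⟨_, rfl⟩)
    -- evaluation of M
    have hevalM : eval p M = v ^ (∑ i, (hN i : ℤ) * lam0 i) := by
      rw [hM, map_prod]
      simp only [map_pow, eval_X]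
      have e1 : ∀ a : Fin n, (p a) ^ hN a = v ^ ((hN a : ℤ) * lam0 a) := by
        intro a; rw [hp, ← zpow_natCast (v ^ (lam0 a)) (hN a), ← zpow_mul, mul_comm]
      rw [Finset.prod_congr rfl (fun a _ => e1 a), ← aux_zpow_sum]
    -- factors away from lam0 are units
    have hunit : IsUnit (φ (∏ lam ∈ D.erase lam0, f lam)) := by
      rw [map_prod]
      apply Finset.prod_induction _ IsUnit (fun a b ha hb => ha.mul hb) isUnit_one
      intro lam hlam
      have hlamD : lam ∈ D := Finset.mem_of_mem_erase hlam
      have hlamne : lam ≠ lam0 := Finset.ne_of_mem_erase hlam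
      have hne : eval p (f lam) ≠ 0 := by
        rw [hf, map_sub, eval_C, hevalM, sub_ne_zero]
        intro e
        exact hsep lam hlamD hlamne (aux_zpow_inj e.symm)
      have hcompl : f lam ∈ m.primeCompl := by
        intro hc
        exact hne hc
      exact IsLocalization.map_units (M := m.primeCompl) L ⟨f lam, hcompl⟩
    obtain ⟨w, hw⟩ := isUnit_iff_exists_inv.mp hunit
    have : φ (f lam0) = φ (Gen (fun i => (hN i : ℤ))) * w := by
      rw [hGenEq, ← Finset.mul_prod_erase D f hlam0, map_mul, mul_assoc, hw, mul_one]
    rw [show ((∏ i, (X i : R) ^ hN i) - C (v ^ (∑ i, (hN i : ℤ) * lam0 i))) = f lam0 from rfl,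
      this]
    exact Ideal.mul_mem_right _ _ hGI
  -- key step: X a - C (p a) maps into I
  have key : ∀ a : Fin n, φ ((X a : R) - C (p a)) ∈ I := by
    intro a
    set S : Finset (Fin n → ℤ) := (D.erase lam0).image (fun lam => lam - lam0) with hS
    have hS0 : ∀ μ ∈ S, μ ≠ 0 := by
      rintro μ hμ
      rw [hS, Finset.mem_image] at hμ
      obtain ⟨lam, hlam, rfl⟩ := hμ
      exact sub_ne_zero.mpr (Finset.ne_of_mem_erase hlam)
    obtain ⟨g, hg⟩ := aux_generic S hS0
    set c : ℕ := (S.sup fun μ => (μ a).natAbs) + 1 with hc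
    set hN : Fin n → ℕ := fun i => c * g i with hhN
    set hN' : Fin n → ℕ := fun i => hN i + (if i = a then 1 else 0) with hhN'
    -- difference computations
    have hdiff : ∀ lam ∈ D, lam ≠ lam0 →
        (∑ i, (hN i : ℤ) * lam i) - (∑ i, (hN i : ℤ) * lam0 i)
          = (c : ℤ) * ∑ i, (g i : ℤ) * ((lam - lam0) i) := by
      intro lam _ _
      rw [← Finset.sum_sub_distrib, Finset.mul_sum]
      apply Finset.sum_congr rfl
      intro i _
      simp only [hhN, Pi.sub_apply]
      push_cast
      ring
    have hmemS : ∀ lam ∈ D, lam ≠ lam0 → (lam - lam0) ∈ S := by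
      intro lam hlam hne
      rw [hS, Finset.mem_image]
      exact ⟨lam, Finset.mem_erase.mpr ⟨hne, hlam⟩, rfl⟩
    have cond1 : ∀ lam ∈ D, lam ≠ lam0 →
        (∑ i, (hN i : ℤ) * lam i) ≠ ∑ i, (hN i : ℤ) * lam0 i := by
      intro lam hlam hne heq
      have h1 := hdiff lam hlam hne
      rw [heq, sub_self] at h1
      have h2 := hg _ (hmemS lam hlam hne)
      have : (c : ℤ) ≠ 0 := by positivity
      exact h2 (by
        rcases mul_eq_zero.mp h1.symm with h | h
        · exact absurd h this
        · exact h)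
    have cond2 : ∀ lam ∈ D, lam ≠ lam0 →
        (∑ i, (hN' i : ℤ) * lam i) ≠ ∑ i, (hN' i : ℤ) * lam0 i := by
      intro lam hlam hne heq
      set s : ℤ := ∑ i, (g i : ℤ) * ((lam - lam0) i) with hs
      have h2 : s ≠ 0 := hg _ (hmemS lam hlam hne)
      have hd' : (∑ i, (hN' i : ℤ) * lam i) - (∑ i, (hN' i : ℤ) * lam0 i)
          = (c : ℤ) * s + (lam a - lam0 a) := by
        have expand : ∀ lamx : Fin n → ℤ, (∑ i, (hN' i : ℤ) * lamx i)
            = (∑ i, (hN i : ℤ) * lamx i) + lamx a := by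
          intro lamx
          rw [hhN']
          push_cast
          rw [show (∑ i, ((hN i : ℤ) + (if i = a then 1 else 0)) * lamx i)
              = (∑ i, ((hN i : ℤ) * lamx i + (if i = a then lamx i else 0))) from
            Finset.sum_congr rfl (fun i _ => by split <;> ring),
            Finset.sum_add_distrib, Finset.sum_ite_eq' Finset.univ a lamx]
          simp
        rw [expand lam, expand lam0]
        have hd2 := hdiff lam hlam hne
        rw [← hs] at hd2
        linarith
      rw [heq, sub_self] at hd'
      -- |c * s| ≥ c > |lam a - lam0 a|
      have hlt : ((lam - lam0) a).natAbs < c := by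
        rw [hc]
        exact Nat.lt_succ_of_le (Finset.le_sup (f := fun μ => (μ a).natAbs) (hmemS lam hlam hne))
      have hsabs : 1 ≤ s.natAbs := Int.natAbs_pos.mpr h2
      have heq2 : (c : ℤ) * s = -(lam a - lam0 a) := by linarith
      have habs := congrArg Int.natAbs heq2
      rw [Int.natAbs_mul, Int.natAbs_neg, Int.natAbs_natCast] at habs
      have hle : c ≤ c * s.natAbs := Nat.le_mul_of_pos_right c hsabs
      have hfin : c ≤ (lam a - lam0 a).natAbs := habs ▸ hle
      have hPi : ((lam - lam0) a).natAbs = (lam a - lam0 a).natAbs := rfl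
      exact absurd hfin (not_le.mpr (hPi ▸ hlt))
    have hA := inI hN cond1
    have hB := inI hN' cond2
    -- rewrite B
    have hmon : (∏ i, (X i : R) ^ hN' i) = (∏ i, (X i : R) ^ hN i) * X a := by
      rw [hhN']
      rw [show (∏ i, (X i : R) ^ (hN i + (if i = a then 1 else 0)))
          = ∏ i, ((X i : R) ^ hN i * (if i = a then X i else 1)) from
        Finset.prod_congr rfl (fun i _ => by rw [pow_add]; split <;> simp)]
      rw [Finset.prod_mul_distrib, Finset.prod_ite_eq' Finset.univ a (fun i => (X i : R))]
      simp
    have hu' : (∑ i, (hN' i : ℤ) * lam0 i) = (∑ i, (hN i : ℤ) * lam0 i) + lam0 a := by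
      rw [hhN']
      push_cast
      rw [show (∑ i, ((hN i : ℤ) + (if i = a then 1 else 0)) * lam0 i)
          = (∑ i, ((hN i : ℤ) * lam0 i + (if i = a then lam0 i else 0))) from
        Finset.sum_congr rfl (fun i _ => by split <;> ring),
        Finset.sum_add_distrib, Finset.sum_ite_eq' Finset.univ a lam0]
      simp
    set u : ℤ := ∑ i, (hN i : ℤ) * lam0 i with hu
    set M : R := ∏ i, (X i : R) ^ hN i with hM
    rw [hmon, hu'] at hB
    -- the identity
    have hv1 : v ^ (-u) * v ^ u = (1 : RatFunc ℚ) := by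
      rw [← zpow_add₀ RatFunc.X_ne_zero]; simp
    have hv2 : v ^ (-u) * v ^ (u + lam0 a) = v ^ (lam0 a) := by
      rw [← zpow_add₀ RatFunc.X_ne_zero]
      congr 1
      ring
    have hid : (X a : R) - C (p a)
        = C (v ^ (-u)) * ((M * X a - C (v ^ (u + lam0 a))) - X a * (M - C (v ^ u))) := by
      have expand : C (v ^ (-u)) * ((M * X a - C (v ^ (u + lam0 a))) - X a * (M - C (v ^ u)))
          = X a * (C (v ^ (-u)) * C (v ^ u)) - C (v ^ (-u)) * C (v ^ (u + lam0 a)) := by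
        ring
      rw [expand, ← map_mul C, hv1, ← map_mul C, hv2, map_one, mul_one]
    rw [hid, map_mul, map_sub, map_mul]
    exact Ideal.mul_mem_left _ _ (Ideal.sub_mem _ hB (Ideal.mul_mem_left _ _ hA))
  -- conclude I = maximal ideal
  have hI_eq : I = IsLocalRing.maximalIdeal L := by
    have hmax : Ideal.map φ m = IsLocalRing.maximalIdeal L :=
      Localization.AtPrime.map_eq_maximalIdeal
    rw [← hmax]
    apply le_antisymm
    · exact Ideal.map_mono hspan_le_m
    · have h1 : m ≤ Ideal.span (Set.range fun a => (X a : R) - C (p a)) := by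
        intro f hfm
        have h2 := aux_sub_C_mem p f
        have h3 : eval p f = 0 := hfm
        rwa [h3, map_zero, sub_zero] at h2
      calc Ideal.map φ m
          ≤ Ideal.map φ (Ideal.span (Set.range fun a => (X a : R) - C (p a))) :=
            Ideal.map_mono h1
        _ ≤ I := by
            rw [Ideal.map_span, Ideal.span_le]
            rintro _ ⟨_, ⟨a, rfl⟩, rfl⟩
            exact key a
  rw [hI_eq]
  exact (Ideal.Quotient.maximal_ideal_iff_isField_quotient _).mp
    (IsLocalRing.maximalIdeal.isMaximal L)
end

section
/- Let n ≥ 1 and let S be a finite set of nonzero vectors in ℚ^n. Then there exists a matrix C ∈ SL_n(ℤ) all of whose entries are nonnegative such that for every row index a ∈ {1,…,n} and every w ∈ S one has Σ_{b=1}^n C_{ab} w_b ≠ 0 (no row of C is orthogonal to any vector of S). -/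
open Matrix Polynomial Finset

namespace Stmt7Aux

def Lmat (n m : ℕ) : Matrix (Fin n) (Fin n) ℤ :=
  fun a b => if (b : ℕ) ≤ a then (m : ℤ) ^ ((a : ℕ) - b) else 0

def Umat (n m : ℕ) : Matrix (Fin n) (Fin n) ℤ :=
  fun a b => if (a : ℕ) ≤ b then (m : ℤ) ^ ((b : ℕ) - a) else 0

def Cmat (n m : ℕ) : Matrix (Fin n) (Fin n) ℤ := Lmat n m * Umat n m

lemma Cmat_det (n m : ℕ) : (Cmat n m).det = 1 := by
  rw [Cmat, Matrix.det_mul]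
  rw [Matrix.det_of_lowerTriangular (Lmat n m) ?hl,
      Matrix.det_of_upperTriangular (M := Umat n m) ?hu]
  · simp [Lmat, Umat]
  case hl =>
    intro i j h
    simp only [Lmat, ite_eq_right_iff]
    intro hle
    exact absurd hle (by simpa using h)
  case hu =>
    intro i j h
    simp only [Umat, ite_eq_right_iff]
    intro hle
    exact absurd hle (by simpa using h)

lemma Cmat_apply (n m : ℕ) (a b : Fin n) :
    Cmat n m a b = ∑ k : Fin n,
      (if (k : ℕ) ≤ a ∧ (k : ℕ) ≤ b then (m : ℤ) ^ ((a : ℕ) + b - 2 * k) else 0) := by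
  rw [Cmat, Matrix.mul_apply]
  refine Finset.sum_congr rfl fun k _ => ?_
  simp only [Lmat, Umat]
  by_cases h1 : (k : ℕ) ≤ a <;> by_cases h2 : (k : ℕ) ≤ b <;>
    simp [h1, h2, ← pow_add]
  congr 1
  omega

lemma Cmat_nonneg (n m : ℕ) (a b : Fin n) : 0 ≤ Cmat n m a b := by
  rw [Cmat_apply]
  refine Finset.sum_nonneg fun k _ => ?_
  split <;> positivity

/-- The polynomial whose value at `m` is `Cmat n m a b`. -/
noncomputable def Qpoly (n : ℕ) (a b : Fin n) : ℚ[X] :=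
  ∑ k : Fin n, if (k : ℕ) ≤ a ∧ (k : ℕ) ≤ b then (X : ℚ[X]) ^ ((a : ℕ) + b - 2 * k) else 0

lemma Qpoly_eval (n m : ℕ) (a b : Fin n) :
    (Qpoly n a b).eval (m : ℚ) = ((Cmat n m a b : ℤ) : ℚ) := by
  rw [Qpoly, Cmat_apply]
  push_cast
  rw [Polynomial.eval_finset_sum]
  refine Finset.sum_congr rfl fun k _ => ?_
  split <;> simp

noncomputable def Ppoly (n : ℕ) (a : Fin n) (w : Fin n → ℚ) : ℚ[X] :=
  ∑ b : Fin n, Polynomial.C (w b) * Qpoly n a b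

lemma Ppoly_eval (n m : ℕ) (a : Fin n) (w : Fin n → ℚ) :
    (Ppoly n a w).eval (m : ℚ) = ∑ b : Fin n, ((Cmat n m a b : ℤ) : ℚ) * w b := by
  rw [Ppoly, Polynomial.eval_finset_sum]
  refine Finset.sum_congr rfl fun b _ => ?_
  rw [eval_mul, eval_C, Qpoly_eval, mul_comm]

lemma Qpoly_coeff_lt {n : ℕ} (a b : Fin n) (d : ℕ) (hd : (a : ℕ) + b < d) :
    (Qpoly n a b).coeff d = 0 := by
  rw [Qpoly, Polynomial.finset_sum_coeff]
  refine Finset.sum_eq_zero fun k _ => ?_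
  split
  · rw [Polynomial.coeff_X_pow, if_neg]
    omega
  · simp

lemma Qpoly_coeff_top {n : ℕ} (a b : Fin n) :
    (Qpoly n a b).coeff ((a : ℕ) + b) = 1 := by
  rw [Qpoly, Polynomial.finset_sum_coeff]
  rw [Finset.sum_eq_single (⟨0, b.pos⟩ : Fin n)]
  · simp
  · intro k _ hk
    have hk' : 0 < (k : ℕ) := by
      rcases Nat.eq_zero_or_pos (k : ℕ) with h | h
      · exact absurd (Fin.ext h : k = ⟨0, b.pos⟩) hk
      · exact h
    split
    · rw [Polynomial.coeff_X_pow, if_neg]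
      omega
    · simp
  · simp

lemma Ppoly_ne_zero (n : ℕ) (a : Fin n) (w : Fin n → ℚ) (hw : w ≠ 0) :
    Ppoly n a w ≠ 0 := by
  have hne : (Finset.univ.filter fun b : Fin n => w b ≠ 0).Nonempty := by
    rcases Function.ne_iff.mp hw with ⟨b, hb⟩
    exact ⟨b, by simpa using hb⟩
  obtain ⟨b₀, hb₀mem, hb₀max⟩ := Finset.exists_max_image _ id hne
  rw [Finset.mem_filter] at hb₀mem
  have hb₀ne : w b₀ ≠ 0 := hb₀mem.2
  have hmax : ∀ b : Fin n, w b ≠ 0 → b ≤ b₀ := by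
    intro b hb
    exact hb₀max b (Finset.mem_filter.mpr ⟨Finset.mem_univ _, hb⟩)
  intro hP
  have hcoeff : (Ppoly n a w).coeff ((a : ℕ) + b₀) = w b₀ := by
    rw [Ppoly, Polynomial.finset_sum_coeff]
    rw [Finset.sum_eq_single b₀]
    · rw [Polynomial.coeff_C_mul, Qpoly_coeff_top, mul_one]
    · intro b _ hb
      rw [Polynomial.coeff_C_mul]
      by_cases hwb : w b = 0
      · simp [hwb]
      · have hlt : (b : ℕ) < b₀ := lt_of_le_of_ne (hmax b hwb) (fun h => hb (Fin.ext h))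
        rw [Qpoly_coeff_lt a b _ (by omega), mul_zero]
    · simp
  rw [hP] at hcoeff
  simp at hcoeff
  exact hb₀ne hcoeff.symm

end Stmt7Aux

/-- Let `S` be a finite set of nonzero vectors in `ℚ^n`.  Then there is
a matrix `C ∈ SL_n(ℤ)` with nonnegative entries such that no row of `C` is orthogonal to
any vector of `S`. -/
theorem stmt7 (n : ℕ) (hn : 1 ≤ n) (S : Finset (Fin n → ℚ))
    (hS : ∀ w ∈ S, w ≠ 0) :
    ∃ C : Matrix (Fin n) (Fin n) ℤ,
      C.det = 1 ∧ (∀ a b, 0 ≤ C a b) ∧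
      ∀ a : Fin n, ∀ w ∈ S, (∑ b, (C a b : ℚ) * w b) ≠ 0 := by
  classical
  set T : Finset ℚ := S.biUnion (fun w => Finset.univ.biUnion
    (fun a : Fin n => (Stmt7Aux.Ppoly n a w).roots.toFinset)) with hT
  obtain ⟨x, hx, hxT⟩ := (Set.infinite_range_of_injective
    (Nat.cast_injective : Function.Injective (Nat.cast : ℕ → ℚ))).exists_notMem_finset T
  obtain ⟨m, rfl⟩ := hx
  refine ⟨Stmt7Aux.Cmat n m, Stmt7Aux.Cmat_det n m, Stmt7Aux.Cmat_nonneg n m, ?_⟩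
  intro a w hw h
  apply hxT
  rw [hT]
  refine Finset.mem_biUnion.mpr ⟨w, hw, Finset.mem_biUnion.mpr ⟨a, Finset.mem_univ _, ?_⟩⟩
  rw [Multiset.mem_toFinset, Polynomial.mem_roots (Stmt7Aux.Ppoly_ne_zero n a w (hS w hw))]
  rw [Polynomial.IsRoot, Stmt7Aux.Ppoly_eval]
  exact h
end

section
/- Let n ≥ 1 and let D ⊂ ℤ^n be a finite set, viewed as a finite set of points of ℚ^n. Then the vanishing ideal in ℚ[X_1,…,X_n] of D equals the ideal generated by the polynomials ∏_{λ∈D} (Σ_{a=1}^n h_a X_a − ⟨h,λ⟩) as h ranges over ℤ^n. -/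
/-!
Choose `h ∈ ℤⁿ` such that `λ ↦ ⟨h, λ⟩` is injective on `D`, put `ℓ = ∑ hₐ Xₐ` and
`w_λ = ∏_{μ ≠ λ} (ℓ - ⟨h, μ⟩)`, and let `J` be the ideal generated by the products. Lagrange
interpolation gives `∑_λ c_λ w_λ = 1` with `c_λ ∈ ℚ`, while `w_λ w_μ ∈ J` for `λ ≠ μ` because it
is a multiple of the generator for `h`. The generator for `h + t eₐ` is a polynomial in `t` whose
values at all `t ∈ ℕ` lie in `J`; over a `ℚ`-algebra this forces its coefficients into `J`, and its
linear coefficient is `∑_λ w_λ (Xₐ - λₐ)`. Multiplying by `w_λ` gives `w_λ (Xₐ - λₐ) ∈ J`, hence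
`w_λ f ∈ J` whenever `f (λ) = 0`, and a polynomial `f` vanishing on `D` equals
`∑_λ c_λ w_λ f ∈ J`.
-/

open scoped Polynomial

namespace Polynomial

theorem eq_zero_of_forall_eval_natCast_eq_zero {S : Type*} [CommRing S] [Algebra ℚ S] {P : S[X]}
    (hP : ∀ t : ℕ, P.eval (t : S) = 0) : P = 0 := by
  have hΔ : (fwdDiff 1)^[P.natDegree] P.eval 0 = 0 := by
    rw [fwdDiff_iter_eq_sum_shift]
    exact Finset.sum_eq_zero fun k _ => by simp [hP]
  have hunit : IsUnit (P.natDegree.factorial : S) := by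
    simpa using (IsUnit.mk0 (P.natDegree.factorial : ℚ) (by positivity)).map (algebraMap ℚ S)
  rw [fwdDiff_iter_degree_eq_factorial] at hΔ
  simpa [hunit.mul_left_eq_zero] using hΔ

end Polynomial

open Polynomial in
theorem sum_prod_erase_mul_eq_zero_of_forall_prod_add_mul_eq_zero {A ι : Type*} [CommRing A]
    [Algebra ℚ A] [DecidableEq ι] {s : Finset ι} (ℓ m : ι → A)
    (h : ∀ t : ℕ, ∏ i ∈ s, (ℓ i + t * m i) = 0) :
    ∑ i ∈ s, (∏ j ∈ s.erase i, ℓ j) * m i = 0 := by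
  have hP : ∏ i ∈ s, (C (ℓ i) + C (m i) * X) = 0 :=
    eq_zero_of_forall_eval_natCast_eq_zero fun t => by
      rw [eval_prod, ← h t]
      exact Finset.prod_congr rfl fun i _ => by
        rw [eval_add, eval_mul, eval_C, eval_C, eval_X, mul_comm]
  have := congr_arg (fun p => (derivative p).eval 0) hP
  simp only [derivative_prod_finset, eval_finsetSum, eval_mul, eval_prod, derivative_add,
    derivative_C, derivative_mul, derivative_X, eval_add, eval_C, eval_X] at this
  simpa using this

theorem Finset.prod_erase_mul_prod_erase {M ι : Type*} [CommMonoid M] [DecidableEq ι]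
    {s : Finset ι} (f : ι → M) {i j : ι} (hj : j ∈ s) (hij : i ≠ j) :
    (∏ k ∈ s.erase i, f k) * ∏ k ∈ s.erase j, f k =
      (∏ k ∈ (s.erase i).erase j, f k) * ∏ k ∈ s, f k := by
  rw [← Finset.mul_prod_erase (s.erase i) f (Finset.mem_erase.mpr ⟨hij.symm, hj⟩),
    ← Finset.mul_prod_erase s f hj]
  ac_rfl

theorem mul_eq_zero_of_sum_mul_eq_zero {A ι : Type*} [CommRing A] {s : Finset ι} {c w m : ι → A}
    (hsum : ∑ i ∈ s, c i * w i = 1) (horth : (s : Set ι).Pairwise fun i j => w i * w j = 0)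
    (hm : ∑ i ∈ s, w i * m i = 0) {i : ι} (hi : i ∈ s) : w i * m i = 0 :=
  calc w i * m i = ∑ j ∈ s, c j * w j * (w i * m i) := by rw [← Finset.sum_mul, hsum, one_mul]
    _ = c i * w i * (w i * m i) := Finset.sum_eq_single_of_mem i hi fun j hj hji => by
        rw [mul_assoc, ← mul_assoc (w j), horth hj hi hji, zero_mul, mul_zero]
    _ = c i * w i * ∑ j ∈ s, w j * m j := by
        rw [Finset.mul_sum, Finset.sum_eq_single_of_mem i hi fun j hj hji => ?_]
        rw [← mul_assoc, mul_assoc (c i), horth hi hj hji.symm, mul_zero, zero_mul]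
    _ = 0 := by rw [hm, mul_zero]

theorem Lagrange.sum_nodalWeight_mul_prod_erase_sub_eq_one {F A ι : Type*} [Field F] [CommRing A]
    [Algebra F A] [DecidableEq ι] {s : Finset ι} {v : ι → F} (hvs : Set.InjOn v s)
    (hs : s.Nonempty) (u : A) :
    ∑ i ∈ s, algebraMap F A (nodalWeight s v i) * ∏ j ∈ s.erase i, (u - algebraMap F A (v j)) =
      1 := by
  have := congr_arg (Polynomial.aeval u) (sum_basis hvs hs)
  rw [map_sum, map_one] at this
  rw [← this]
  refine Finset.sum_congr rfl fun i hi => ?_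
  rw [basis_eq_prod_sub_inv_mul_nodal_div hi, ← nodal_erase_eq_nodal_div hi, nodal, map_mul,
    Polynomial.aeval_C, map_prod]
  simp

namespace MvPolynomial

theorem mem_span_X_sub_C_of_eval_eq_zero {R σ : Type*} [CommRing R] (x : σ → R)
    {f : MvPolynomial σ R} (hf : eval x f = 0) :
    f ∈ Ideal.span (Set.range fun a => X a - C (x a)) := by
  set I := Ideal.span (Set.range fun a => (X a - C (x a) : MvPolynomial σ R))
  have hmk : Ideal.Quotient.mkₐ R I = (Algebra.ofId R _).comp (aeval x) := by
    refine algHom_ext fun a => ?_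
    have : X a - C (x a) ∈ I := Ideal.subset_span ⟨a, rfl⟩
    exact Ideal.Quotient.eq.mpr (by simpa using this)
  simpa [hf, Ideal.Quotient.eq_zero_iff_mem] using AlgHom.congr_fun hmk f

variable {K σ : Type*} [Field K] [Fintype σ]

noncomputable def linearForm (h : σ → ℤ) : MvPolynomial σ K := ∑ a, C (h a : K) * X a

def pairing (h : σ → ℤ) (x : σ → K) : K := ∑ a, (h a : K) * x a

noncomputable def hyperplaneProduct (D : Finset (σ → K)) (h : σ → ℤ) : MvPolynomial σ K :=
  ∏ x ∈ D, (linearForm h - C (pairing h x))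

theorem hyperplaneProduct_mem_vanishingIdeal (D : Finset (σ → K)) (h : σ → ℤ) :
    hyperplaneProduct D h ∈ vanishingIdeal K (D : Set (σ → K)) := by
  rw [mem_vanishingIdeal_iff]
  intro x hx
  rw [hyperplaneProduct, map_prod]
  exact Finset.prod_eq_zero hx (by simp [linearForm, pairing])

theorem hyperplaneProduct_add_single [DecidableEq σ] (D : Finset (σ → K)) (h : σ → ℤ) (a : σ)
    (k : ℤ) :
    hyperplaneProduct D (h + Pi.single a k) =
      ∏ x ∈ D, (linearForm h - C (pairing h x) + C (k : K) * (X a - C (x a))) := by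
  refine Finset.prod_congr rfl fun x _ => ?_
  simp [linearForm, pairing, Pi.single_apply, apply_ite C, Finset.sum_add_distrib, add_mul]
  ring

theorem exists_injOn_pairing [CharZero K] (D : Finset (σ → K)) :
    ∃ h : σ → ℤ, Set.InjOn (pairing h) (D : Set (σ → K)) := by
  classical
  -- an integer point where the product of the linear forms `⟨·, x - y⟩` is nonzero separates `D`
  let F : MvPolynomial σ K := ∏ p ∈ D.offDiag, ∑ a, C (p.1 a - p.2 a) * X a
  have hF : F ≠ 0 := by
    refine Finset.prod_ne_zero_iff.mpr fun p hp hp0 => ?_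
    obtain ⟨-, -, hne⟩ := Finset.mem_offDiag.mp hp
    obtain ⟨a, ha⟩ := Function.ne_iff.mp hne
    have := congr_arg (eval (Pi.single a 1)) hp0
    exact ha (by simpa [Pi.single_apply, sub_eq_zero] using this)
  obtain ⟨z, hz, hFz⟩ : ∃ z ∈ Set.univ.pi fun _ => Set.range ((↑) : ℤ → K), eval z F ≠ 0 := by
    by_contra! hF0
    exact hF (funext_set _ (fun _ => Set.infinite_range_of_injective Int.cast_injective)
      fun z hz => by simp [hF0 z hz])
  choose h hh using fun a => hz a (Set.mem_univ a)
  refine ⟨h, fun x hx y hy hxy => by_contra fun hne => hFz ?_⟩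
  rw [map_prod]
  refine Finset.prod_eq_zero (i := (x, y)) (Finset.mem_offDiag.mpr ⟨hx, hy, hne⟩) ?_
  simp only [pairing] at hxy
  simp only [eval_sum, eval_mul, eval_C, eval_X, ← hh, sub_mul, Finset.sum_sub_distrib]
  rw [sub_eq_zero]
  simpa only [mul_comm] using hxy

theorem sum_C_nodalWeight_mul_hyperplaneProduct_erase [DecidableEq (σ → K)]
    {D : Finset (σ → K)} {h : σ → ℤ} (hinj : Set.InjOn (pairing h) (D : Set (σ → K)))
    (hD : D.Nonempty) :
    ∑ x ∈ D, C (Lagrange.nodalWeight D (pairing h) x) * hyperplaneProduct (D.erase x) h = 1 := by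
  have := Lagrange.sum_nodalWeight_mul_prod_erase_sub_eq_one hinj hD
    (linearForm h : MvPolynomial σ K)
  rwa [algebraMap_eq] at this

theorem hyperplaneProduct_erase_mul_X_sub_C_mem_span [CharZero K] [DecidableEq (σ → K)]
    {D : Finset (σ → K)} {h : σ → ℤ}
    (hinj : Set.InjOn (pairing h) (D : Set (σ → K))) {x : σ → K} (hx : x ∈ D) (a : σ) :
    hyperplaneProduct (D.erase x) h * (X a - C (x a)) ∈
      Ideal.span (Set.range (hyperplaneProduct D)) := by
  classical
  set π := Ideal.Quotient.mk (Ideal.span (Set.range (hyperplaneProduct D)))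
  have hgen : ∀ h', π (hyperplaneProduct D h') = 0 := fun h' =>
    Ideal.Quotient.eq_zero_iff_mem.mpr (Ideal.subset_span ⟨h', rfl⟩)
  have hsum := congr_arg π (sum_C_nodalWeight_mul_hyperplaneProduct_erase hinj ⟨x, hx⟩)
  simp only [map_sum, map_mul, map_one] at hsum
  have horth : (D : Set (σ → K)).Pairwise
      fun y z => π (hyperplaneProduct (D.erase y) h) * π (hyperplaneProduct (D.erase z) h) = 0 :=
    fun y _ z hz hyz => by
      dsimp only
      rw [← map_mul, hyperplaneProduct, hyperplaneProduct,
        Finset.prod_erase_mul_prod_erase _ hz hyz, map_mul]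
      exact mul_eq_zero_of_right _ (hgen h)
  rw [← Ideal.Quotient.eq_zero_iff_mem, map_mul]
  refine mul_eq_zero_of_sum_mul_eq_zero (w := fun y => π (hyperplaneProduct (D.erase y) h))
    (m := fun y => π (X a - C (y a))) hsum horth ?_ hx
  simp only [hyperplaneProduct, map_prod]
  -- move `h` along the `a`-th coordinate direction and take the linear coefficient in `t`
  refine sum_prod_erase_mul_eq_zero_of_forall_prod_add_mul_eq_zero _ _ fun t => ?_
  rw [← hgen (h + Pi.single a t), hyperplaneProduct_add_single, map_prod]
  simp

theorem vanishingIdeal_le_span_hyperplaneProduct [CharZero K] (D : Finset (σ → K)) :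
    vanishingIdeal K (D : Set (σ → K)) ≤ Ideal.span (Set.range (hyperplaneProduct D)) := by
  classical
  intro f hf
  set J := Ideal.span (Set.range (hyperplaneProduct D))
  rcases D.eq_empty_or_nonempty with rfl | hD
  · simpa using J.mul_mem_left f (Ideal.subset_span ⟨(0 : σ → ℤ), Finset.prod_empty⟩)
  obtain ⟨h, hinj⟩ := exists_injOn_pairing D
  rw [← mul_one f, ← sum_C_nodalWeight_mul_hyperplaneProduct_erase hinj hD, Finset.mul_sum]
  refine J.sum_mem fun x hx => ?_
  have hcolon : Ideal.span (Set.range fun a => X a - C (x a)) ≤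
      J.colon {hyperplaneProduct (D.erase x) h} :=
    Ideal.span_le.mpr <| Set.range_subset_iff.mpr fun a => Submodule.mem_colon_singleton.mpr <| by
      rw [smul_eq_mul, mul_comm]
      exact hyperplaneProduct_erase_mul_X_sub_C_mem_span hinj hx a
  have hfx := Submodule.mem_colon_singleton.mp
    (hcolon (mem_span_X_sub_C_of_eval_eq_zero x (by simpa using hf x hx)))
  rw [smul_eq_mul] at hfx
  rw [mul_left_comm]
  exact J.mul_mem_left _ hfx

theorem vanishingIdeal_eq_span_hyperplaneProduct [CharZero K] (D : Finset (σ → K)) :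
    vanishingIdeal K (D : Set (σ → K)) = Ideal.span (Set.range (hyperplaneProduct D)) :=
  (vanishingIdeal_le_span_hyperplaneProduct D).antisymm <|
    Ideal.span_le.mpr <| Set.range_subset_iff.mpr <| hyperplaneProduct_mem_vanishingIdeal D

end MvPolynomial

theorem stmt8_general (n : ℕ) (D : Finset (Fin n → ℤ)) :
    MvPolynomial.vanishingIdeal ℚ
        ((fun lam : Fin n → ℤ => fun a : Fin n => (lam a : ℚ)) '' (↑D : Set (Fin n → ℤ))) =
      Ideal.span (Set.range fun h : Fin n → ℤ =>
        ∏ lam ∈ D,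
          ((∑ a, MvPolynomial.C (h a : ℚ) * MvPolynomial.X a) -
            MvPolynomial.C ((∑ a, h a * lam a : ℤ) : ℚ))) := by
  have hcast : Function.Injective fun (lam : Fin n → ℤ) (a : Fin n) => (lam a : ℚ) :=
    fun _ _ h => funext fun a => Int.cast_injective (congr_fun h a)
  rw [← Finset.coe_image, MvPolynomial.vanishingIdeal_eq_span_hyperplaneProduct]
  congr! with h
  rw [MvPolynomial.hyperplaneProduct, Finset.prod_image hcast.injOn]
  simp [MvPolynomial.linearForm, MvPolynomial.pairing]

/-- Let `D ⊂ ℤ^n` be finite, viewed as a set of points of `ℚ^n`.  Then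
the vanishing ideal of `D` in `ℚ[X₁,…,Xₙ]` equals the ideal generated by the polynomials
`∏_{λ ∈ D} (∑ a, h a • X a − ⟨h,λ⟩)` as `h` ranges over `ℤ^n`. -/
theorem stmt8 (n : ℕ) (hn : 1 ≤ n) (D : Finset (Fin n → ℤ)) :
    MvPolynomial.vanishingIdeal ℚ
        ((fun lam : Fin n → ℤ => fun a : Fin n => (lam a : ℚ)) '' (↑D : Set (Fin n → ℤ))) =
      Ideal.span (Set.range fun h : Fin n → ℤ =>
        ∏ lam ∈ D,
          ((∑ a, MvPolynomial.C (h a : ℚ) * MvPolynomial.X a) -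
            MvPolynomial.C ((∑ a, h a * lam a : ℤ) : ℚ))) :=
  stmt8_general n D
end

section
/- Let n ≥ 1 and r ≥ 0, and let D = {λ ∈ ℕ^n : λ_1 + ⋯ + λ_n = r} be the set of n-part compositions of r, viewed as a finite set of points of ℚ^n. Then the vanishing ideal in ℚ[X_1,…,X_n] of D equals the ideal generated by the n+1 polynomials (X_1 + ⋯ + X_n) − r and X_a(X_a − 1)(X_a − 2)⋯(X_a − r) for a = 1,…,n. -/
/-!
The compositions of `r` are the points of the grid `{0, …, r}ⁿ` on which `h = ∑ Xₐ - r` vanishes.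
By Alon's combinatorial Nullstellensatz, the vanishing ideal of the grid is generated by the node
polynomials `Xₐ (Xₐ - 1) ⋯ (Xₐ - r)`. If `f` vanishes on the compositions, choose a polynomial `q`
interpolating `f / h` on the (finite) grid; then `f - q h` vanishes on the whole grid, so `f` lies
in the ideal generated by `h` and the node polynomials.
-/

namespace MvPolynomial

variable {K σ : Type*} [Field K]

theorem exists_eval_eq_one_eval_eq_zero {x y : σ → K} (hxy : x ≠ y) :
    ∃ p : MvPolynomial σ K, eval x p = 1 ∧ eval y p = 0 := by
  obtain ⟨i, hi⟩ := Function.ne_iff.mp hxy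
  refine ⟨C (x i - y i)⁻¹ * (X i - C (y i)), ?_, ?_⟩
  · simp [inv_mul_cancel₀ (sub_ne_zero.mpr hi)]
  · simp

theorem exists_eval_eq_one_eval_eq_zero_on_finset (P : Finset (σ → K)) (x : σ → K) :
    ∃ p : MvPolynomial σ K, eval x p = 1 ∧ ∀ y ∈ P, y ≠ x → eval y p = 0 := by
  classical
  have separating (y : σ → K) : ∃ p : MvPolynomial σ K, x ≠ y → eval x p = 1 ∧ eval y p = 0 := by
    by_cases hxy : x = y
    · exact ⟨0, fun h => (h hxy).elim⟩
    · exact (exists_eval_eq_one_eval_eq_zero hxy).imp fun _ hp _ => hp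
  choose sep hsep using separating
  refine ⟨∏ y ∈ P.erase x, sep y, ?_, fun y hy hyx => ?_⟩
  · rw [eval_prod]
    exact Finset.prod_eq_one fun y hy => (hsep y (Finset.ne_of_mem_erase hy).symm).1
  · rw [eval_prod]
    exact Finset.prod_eq_zero (Finset.mem_erase.mpr ⟨hyx, hy⟩) (hsep y hyx.symm).2

theorem exists_eval_eq_on_finite {P : Set (σ → K)} (hP : P.Finite) (c : (σ → K) → K) :
    ∃ q : MvPolynomial σ K, ∀ x ∈ P, eval x q = c x := by
  classical
  choose δ hδx hδ using exists_eval_eq_one_eval_eq_zero_on_finset hP.toFinset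
  refine ⟨∑ x ∈ hP.toFinset, C (c x) * δ x, fun y hy => ?_⟩
  rw [eval_sum, Finset.sum_eq_single_of_mem y (hP.mem_toFinset.mpr hy)]
  · simp [hδx]
  · intro x _ hxy
    simp [hδ x y (hP.mem_toFinset.mpr hy) (Ne.symm hxy)]

theorem vanishingIdeal_pi_finset [Finite σ] (S : σ → Finset K) (hS : ∀ i, (S i).Nonempty) :
    vanishingIdeal K {x : σ → K | ∀ i, x i ∈ S i} =
      Ideal.span (Set.range fun i => ∏ s ∈ S i, (X i - C s)) := by
  refine le_antisymm (fun f hf => ?_) (Ideal.span_le.mpr ?_)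
  · obtain ⟨h, -, rfl⟩ := combinatorial_nullstellensatz_exists_linearCombination S hS f
      fun x hx => (mem_vanishingIdeal_iff.mp hf) x hx
    exact Finsupp.mem_span_range_iff_exists_finsupp.mpr ⟨h, rfl⟩
  · rintro _ ⟨i, rfl⟩
    refine mem_vanishingIdeal_iff.mpr fun x hx => ?_
    rw [aeval_eq_eval, eval_prod]
    exact Finset.prod_eq_zero (hx i) (by simp)

theorem vanishingIdeal_pi_finset_inter_eval_eq_zero [Finite σ] (S : σ → Finset K)
    (hS : ∀ i, (S i).Nonempty) (h : MvPolynomial σ K) :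
    vanishingIdeal K {x : σ → K | (∀ i, x i ∈ S i) ∧ eval x h = 0} =
      Ideal.span (insert h (Set.range fun i => ∏ s ∈ S i, (X i - C s))) := by
  set grid := {x : σ → K | ∀ i, x i ∈ S i}
  have grid_finite : grid.Finite := by
    simpa [grid, Set.pi] using Set.Finite.pi fun i => (S i).finite_toSet
  refine le_antisymm (fun f hf => ?_) (Ideal.span_le.mpr ?_)
  · obtain ⟨q, hq⟩ := exists_eval_eq_on_finite grid_finite fun x => eval x f / eval x h
    have hfqh : f - q * h ∈ vanishingIdeal K grid := by
      refine mem_vanishingIdeal_iff.mpr fun x hx => ?_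
      rw [aeval_eq_eval, map_sub, map_mul, hq x hx]
      by_cases hhx : eval x h = 0
      · rw [hhx, mul_zero, sub_zero]
        exact mem_vanishingIdeal_iff.mp hf x ⟨hx, hhx⟩
      · rw [div_mul_cancel₀ _ hhx, sub_self]
    rw [vanishingIdeal_pi_finset S hS] at hfqh
    rw [← sub_add_cancel f (q * h)]
    exact Ideal.add_mem _ (Ideal.span_mono (Set.subset_insert _ _) hfqh)
      (Ideal.mul_mem_left _ _ (Ideal.subset_span (Set.mem_insert _ _)))
  · rintro _ (rfl | hg)
    · exact mem_vanishingIdeal_iff.mpr fun x hx => hx.2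
    · exact vanishingIdeal_anti_mono (fun x hx => hx.1)
        ((vanishingIdeal_pi_finset S hS).ge (Ideal.subset_span hg))

end MvPolynomial

open MvPolynomial in
theorem image_natCast_setOf_sum_eq {K : Type*} [Field K] [CharZero K] (n r : ℕ) :
    (fun lam : Fin n → ℕ => fun a => (lam a : K)) '' {lam | ∑ a, lam a = r} =
      {x | (∀ a, x a ∈ (Finset.range (r + 1)).map Nat.castEmbedding) ∧
        eval x ((∑ a, X a) - C (r : K)) = 0} := by
  ext x
  simp only [Set.mem_image, Set.mem_ofPred_eq, Finset.mem_map, Finset.mem_range,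
    Nat.castEmbedding_apply, map_sub, eval_C, map_sum, eval_X, sub_eq_zero]
  constructor
  · rintro ⟨lam, hlam, rfl⟩
    refine ⟨fun a => ⟨lam a, ?_, rfl⟩, by rw [← hlam]; push_cast; rfl⟩
    exact Nat.lt_succ_of_le (hlam ▸ Finset.single_le_sum (by simp) (Finset.mem_univ a))
  · rintro ⟨hx, hsum⟩
    choose lam _ hlam using hx
    refine ⟨lam, ?_, funext hlam⟩
    exact_mod_cast (funext hlam ▸ hsum : ∑ a, (lam a : K) = r)

theorem stmt9_general (n r : ℕ) :
    MvPolynomial.vanishingIdeal ℚ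
        ((fun lam : Fin n → ℕ => fun a : Fin n => (lam a : ℚ)) ''
          {lam : Fin n → ℕ | (∑ a, lam a) = r}) =
      Ideal.span
        ({(∑ a, MvPolynomial.X a) - MvPolynomial.C (r : ℚ)} ∪
          Set.range fun a : Fin n =>
            ∏ j ∈ Finset.range (r + 1),
              (MvPolynomial.X a - MvPolynomial.C (j : ℚ))) := by
  rw [image_natCast_setOf_sum_eq, MvPolynomial.vanishingIdeal_pi_finset_inter_eval_eq_zero _
    fun _ => by simp, ← Set.singleton_union]
  simp only [Finset.prod_map, Nat.castEmbedding_apply]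

/-- Let `D` be the set of `n`-part compositions of `r`, viewed as points
of `ℚ^n`.  Then the vanishing ideal of `D` in `ℚ[X₁,…,Xₙ]` equals the ideal generated by
`(X₁ + ⋯ + Xₙ) − r` together with `X_a(X_a − 1)⋯(X_a − r)` for `a = 1,…,n`. -/
theorem stmt9 (n r : ℕ) (hn : 1 ≤ n) :
    MvPolynomial.vanishingIdeal ℚ
        ((fun lam : Fin n → ℕ => fun a : Fin n => (lam a : ℚ)) ''
          {lam : Fin n → ℕ | (∑ a, lam a) = r}) =
      Ideal.span
        ({(∑ a, MvPolynomial.X a) - MvPolynomial.C (r : ℚ)} ∪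
          Set.range fun a : Fin n =>
            ∏ j ∈ Finset.range (r + 1),
              (MvPolynomial.X a - MvPolynomial.C (j : ℚ))) :=
  stmt9_general n r
end

section
/- Let n ≥ 1 and r ≥ 0, let D = {λ ∈ ℕ^n : λ_1 + ⋯ + λ_n = r}, and for λ ∈ D let p_λ = (v^{λ_1},…,v^{λ_n}) ∈ ℚ(v)^n. Then the vanishing ideal in ℚ(v)[K_1,…,K_n] of the finite point set {p_λ : λ ∈ D} equals the ideal generated by the n+1 polynomials K_1 K_2 ⋯ K_n − v^r and (K_a − 1)(K_a − v)(K_a − v^2)⋯(K_a − v^r) for a = 1,…,n. -/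
/-!
The points `p_λ` lie on the grid `{1, v, …, v^r}ⁿ`, on which `M = K₁⋯Kₙ` takes the values
`v^k` with `k ≤ n r`, and `M = v^r` exactly at the points `p_λ`. If `f` vanishes at the `p_λ`,
then `p(M) f` vanishes on the whole grid, where `p = ∏_{k ≤ n r, k ≠ r} (t - v^k)`, so by the
combinatorial Nullstellensatz it lies in the ideal of the univariate grid polynomials. Modulo
`M - v^r` the factor `p(M)` is the nonzero constant `p(v^r)`, hence `f` lies in the ideal
generated by `M - v^r` and the grid polynomials.
-/

open MvPolynomial

theorem RatFunc.X_pow_injective (K : Type*) [Field K] :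
    Function.Injective fun k : ℕ => (RatFunc.X : RatFunc K) ^ k := by
  intro i j h
  simp only [← RatFunc.algebraMap_X, ← map_pow] at h
  simpa using congrArg Polynomial.natDegree (RatFunc.algebraMap_injective K h)

namespace MvPolynomial

variable {R σ : Type*}

theorem mem_span_prod_X_sub_C_of_eval_eq_zero [CommRing R] [IsDomain R] [Finite σ]
    (S : σ → Finset R) (hS : ∀ i, (S i).Nonempty) (f : MvPolynomial σ R)
    (hf : ∀ x : σ → R, (∀ i, x i ∈ S i) → eval x f = 0) :
    f ∈ Ideal.span (Set.range fun i => ∏ s ∈ S i, (X i - C s)) := by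
  obtain ⟨h, -, rfl⟩ := combinatorial_nullstellensatz_exists_linearCombination S hS f hf
  rw [Ideal.span, ← Finsupp.range_linearCombination]
  exact LinearMap.mem_range_self _ h

end MvPolynomial

theorem Ideal.mem_sup_span_sub_of_aeval_mul_mem {K A : Type*} [Field K] [CommRing A]
    [Algebra K A] {J : Ideal A} {m f : A} {c : K} {p : Polynomial K} (hp : p.eval c ≠ 0)
    (hpf : Polynomial.aeval m p * f ∈ J) :
    f ∈ J ⊔ Ideal.span {m - algebraMap K A c} := by
  obtain ⟨q, hq⟩ := Polynomial.X_sub_C_dvd_sub_C_eval (a := c) (p := p)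
  replace hq := congrArg (Polynomial.aeval m) hq
  simp only [map_sub, map_mul, Polynomial.aeval_C, Polynomial.aeval_X] at hq
  have hcf : algebraMap K A (p.eval c) * f ∈ J ⊔ Ideal.span {m - algebraMap K A c} := by
    have : algebraMap K A (p.eval c) * f =
        Polynomial.aeval m p * f - (m - algebraMap K A c) * (Polynomial.aeval m q * f) := by
      linear_combination (-f) * hq
    rw [this]
    exact sub_mem (Ideal.mem_sup_left hpf)
      (Ideal.mem_sup_right (Ideal.mul_mem_right _ _ (Ideal.mem_span_singleton_self _)))
  simpa [← mul_assoc, ← map_mul, hp] using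
    Ideal.mul_mem_left _ (algebraMap K A (p.eval c)⁻¹) hcf

section PowerPoints

variable {K : Type*} [Field K] {v : K} (n r : ℕ)

theorem vanishingIdeal_image_pow_le_span (hv : Function.Injective (v ^ · : ℕ → K)) :
    vanishingIdeal K ((fun lam : Fin n → ℕ => fun a => v ^ lam a) '' {lam | ∑ a, lam a = r}) ≤
      Ideal.span ({(∏ a, X a) - C (v ^ r)} ∪
        Set.range fun a : Fin n => ∏ j ∈ Finset.range (r + 1), (X a - C (v ^ j))) := by
  classical
  intro f hf
  set p : Polynomial K :=
    ∏ k ∈ (Finset.range (n * r + 1)).erase r, (Polynomial.X - Polynomial.C (v ^ k))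
  have hp : p.eval (v ^ r) ≠ 0 := by
    simp only [p, Polynomial.eval_prod, Polynomial.eval_sub, Polynomial.eval_X, Polynomial.eval_C]
    exact Finset.prod_ne_zero_iff.2 fun k hk =>
      sub_ne_zero.2 fun h => Finset.ne_of_mem_erase hk (hv h).symm
  have hgrid : Polynomial.aeval (∏ a, X a) p * f ∈ Ideal.span (Set.range fun a : Fin n =>
      ∏ s ∈ (Finset.range (r + 1)).image (v ^ ·), (X a - C s)) := by
    refine mem_span_prod_X_sub_C_of_eval_eq_zero _ (fun _ => by simp) _ fun x hx => ?_
    simp only [Finset.mem_image, Finset.mem_range, Nat.lt_succ_iff] at hx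
    choose μ hμr hμ using hx
    obtain rfl : (fun a => v ^ μ a) = x := funext hμ
    have hM : aeval (R := K) (fun a => v ^ μ a) (∏ a, X a) = v ^ ∑ a, μ a := by
      simp [Finset.prod_pow_eq_pow_sum]
    change aeval (fun a => v ^ μ a) _ = 0
    rw [map_mul, ← Polynomial.aeval_algHom_apply, hM]
    by_cases hsum : ∑ a, μ a = r
    · rw [hf _ ⟨μ, hsum, rfl⟩, mul_zero]
    · have hle : ∑ a, μ a ≤ n * r := by
        simpa using Finset.sum_le_card_nsmul Finset.univ μ r fun a _ => hμr a
      rw [Polynomial.coe_aeval_eq_eval, Polynomial.eval_prod,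
        Finset.prod_eq_zero (i := ∑ a, μ a), zero_mul]
      · exact Finset.mem_erase.2 ⟨hsum, Finset.mem_range.2 (by omega)⟩
      · simp
  have hgens : (fun a : Fin n => ∏ s ∈ (Finset.range (r + 1)).image (v ^ ·), (X a - C s)) =
      fun a => ∏ j ∈ Finset.range (r + 1), (X a - C (v ^ j)) :=
    funext fun a => Finset.prod_image fun i _ j _ h => hv h
  rw [hgens] at hgrid
  rw [Ideal.span_union, sup_comm, ← algebraMap_eq]
  exact Ideal.mem_sup_span_sub_of_aeval_mul_mem hp hgrid

theorem span_le_vanishingIdeal_image_pow :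
    Ideal.span ({(∏ a, X a) - C (v ^ r)} ∪
        Set.range fun a : Fin n => ∏ j ∈ Finset.range (r + 1), (X a - C (v ^ j))) ≤
      vanishingIdeal K ((fun lam : Fin n → ℕ => fun a => v ^ lam a) '' {lam | ∑ a, lam a = r}) := by
  rw [Ideal.span_le]
  rintro g hg _ ⟨lam, hlam : ∑ a, lam a = r, rfl⟩
  rcases hg with rfl | ⟨a, rfl⟩
  · simp [Finset.prod_pow_eq_pow_sum, hlam]
  · rw [map_prod]
    refine Finset.prod_eq_zero (i := lam a) ?_ (by simp)
    rw [Finset.mem_range, Nat.lt_succ_iff, ← hlam]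
    exact Finset.single_le_sum (fun _ _ => Nat.zero_le _) (Finset.mem_univ a)

end PowerPoints

theorem stmt10_general (n r : ℕ) :
    MvPolynomial.vanishingIdeal (RatFunc ℚ)
        ((fun lam : Fin n → ℕ => fun a : Fin n => (RatFunc.X : RatFunc ℚ) ^ (lam a)) ''
          {lam : Fin n → ℕ | (∑ a, lam a) = r}) =
      Ideal.span
        ({(∏ a, MvPolynomial.X a) - MvPolynomial.C ((RatFunc.X : RatFunc ℚ) ^ r)} ∪
          Set.range fun a : Fin n =>
            ∏ j ∈ Finset.range (r + 1),
              (MvPolynomial.X a - MvPolynomial.C ((RatFunc.X : RatFunc ℚ) ^ j))) :=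
  le_antisymm (vanishingIdeal_image_pow_le_span n r (RatFunc.X_pow_injective ℚ))
    (span_le_vanishingIdeal_image_pow n r)

/-- Let `D` be the set of `n`-part compositions of `r` and, for
`λ ∈ D`, let `p_λ = (v^{λ_1},…,v^{λ_n}) ∈ ℚ(v)^n`.  Then the vanishing ideal of
`{p_λ : λ ∈ D}` in `ℚ(v)[K₁,…,Kₙ]` equals the ideal generated by `K₁⋯Kₙ − v^r`
together with `(K_a − 1)(K_a − v)⋯(K_a − v^r)` for `a = 1,…,n`. -/
theorem stmt10 (n r : ℕ) (hn : 1 ≤ n) :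
    MvPolynomial.vanishingIdeal (RatFunc ℚ)
        ((fun lam : Fin n → ℕ => fun a : Fin n => (RatFunc.X : RatFunc ℚ) ^ (lam a)) ''
          {lam : Fin n → ℕ | (∑ a, lam a) = r}) =
      Ideal.span
        ({(∏ a, MvPolynomial.X a) - MvPolynomial.C ((RatFunc.X : RatFunc ℚ) ^ r)} ∪
          Set.range fun a : Fin n =>
            ∏ j ∈ Finset.range (r + 1),
              (MvPolynomial.X a - MvPolynomial.C ((RatFunc.X : RatFunc ℚ) ^ j))) :=
  stmt10_general n r
end

section
/- Let n ≥ 1 and r, s ≥ 0, and let D = {λ ∈ ℤ^n : λ_1 + ⋯ + λ_n = r − s, and for every nonempty proper subset A ⊊ {1,…,n}, −s ≤ Σ_{a∈A} λ_a ≤ r}, viewed as a finite set of points of ℚ^n. Then the vanishing ideal in ℚ[X_1,…,X_n] of D equals the ideal generated by the polynomial (X_1 + ⋯ + X_n) − (r − s) together with the polynomials (P_A + s)(P_A + s − 1)⋯(P_A − r + 1)(P_A − r) for each nonempty proper subset A ⊊ {1,…,n}, where P_A = Σ_{a∈A} X_a. -/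
/-!
Let `W` be the set of integers in `[-s, r]`. Every point of `D` lies in the grid `Wⁿ`, whose
vanishing ideal is generated, by the combinatorial Nullstellensatz, by the products
`∏_{t ∈ W} (X_a - t)`; these are the generators for `A = {a}` (or, when `n = 1`, multiples of
`∑ X_a - (r - s)`), so they lie in the ideal `I` of the statement. Conversely, at an integer
grid point outside `D` some generator does not vanish; multiplying it by an indicator polynomial
of that point on the grid gives an element of `I` equal to `1` there and `0` on the rest of the
grid. Subtracting from a polynomial vanishing on `D` the corresponding combination of these
elements leaves a polynomial vanishing on the whole grid, hence lying in `I`.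
-/

open MvPolynomial Finset

namespace MvPolynomial

variable {σ K : Type*} [Field K]

theorem vanishingIdeal_pi_le_span [Finite σ] (T : σ → Finset K) (hT : ∀ i, (T i).Nonempty) :
    vanishingIdeal K (Set.univ.pi fun i => (T i : Set K)) ≤
      Ideal.span (Set.range fun i => ∏ t ∈ T i, (X i - C t)) := by
  intro f hf
  obtain ⟨h, -, rfl⟩ := combinatorial_nullstellensatz_exists_linearCombination T hT f
    fun x hx => hf x (Set.mem_univ_pi.mpr hx)
  rw [Ideal.span, ← Finsupp.range_linearCombination]
  exact LinearMap.mem_range_self _ h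

theorem exists_eval_eq_one_and_eval_eq_zero {x y : σ → K} (hxy : y ≠ x) :
    ∃ p : MvPolynomial σ K, eval x p = 1 ∧ eval y p = 0 := by
  obtain ⟨a, ha⟩ := Function.ne_iff.mp hxy
  refine ⟨C (x a - y a)⁻¹ * (X a - C (y a)), ?_, by simp⟩
  simp [inv_mul_cancel₀ (sub_ne_zero.mpr (Ne.symm ha))]

theorem exists_eval_eq_one_and_forall_eval_eq_zero (Γ : Finset (σ → K)) (x : σ → K) :
    ∃ p : MvPolynomial σ K, eval x p = 1 ∧ ∀ y ∈ Γ, y ≠ x → eval y p = 0 := by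
  classical
  have hsep : ∀ y ∈ Γ.erase x, ∃ p : MvPolynomial σ K, eval x p = 1 ∧ eval y p = 0 :=
    fun y hy => exists_eval_eq_one_and_eval_eq_zero (ne_of_mem_erase hy)
  choose! p hpx hpy using hsep
  refine ⟨∏ y ∈ Γ.erase x, p y, by rw [map_prod, prod_eq_one hpx], fun y hy hyx => ?_⟩
  rw [map_prod]
  exact prod_eq_zero (mem_erase.mpr ⟨hyx, hy⟩) (hpy y (mem_erase.mpr ⟨hyx, hy⟩))

theorem vanishingIdeal_le_of_exists_eval_ne_zero (Γ : Finset (σ → K)) {S : Set (σ → K)}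
    {I : Ideal (MvPolynomial σ K)} (hΓ : vanishingIdeal K (Γ : Set (σ → K)) ≤ I)
    (hsep : ∀ x ∈ Γ, x ∉ S → ∃ g ∈ I, eval x g ≠ 0) :
    vanishingIdeal K S ≤ I := by
  classical
  have hδ : ∀ x ∈ Γ, x ∉ S → ∃ δ ∈ I, eval x δ = 1 ∧ ∀ y ∈ Γ, y ≠ x → eval y δ = 0 := by
    intro x hx hxS
    obtain ⟨g, hgI, hgx⟩ := hsep x hx hxS
    obtain ⟨p, hpx, hpy⟩ := exists_eval_eq_one_and_forall_eval_eq_zero Γ x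
    exact ⟨C (eval x g)⁻¹ * p * g, I.mul_mem_left _ hgI, by simp [hpx, hgx],
      fun y hy hyx => by simp [hpy y hy hyx]⟩
  choose! δ hδI hδx hδy using hδ
  intro f (hf : ∀ y ∈ S, eval y f = 0)
  set Γ' := Γ.filter (· ∉ S)
  have hinterp : ∀ y ∈ Γ, eval y (∑ x ∈ Γ', C (eval x f) * δ x) = eval y f := by
    intro y hy
    rw [map_sum]
    by_cases hyS : y ∈ S
    · rw [hf y hyS]
      refine sum_eq_zero fun x hx => ?_
      obtain ⟨hxΓ, hxS⟩ := mem_filter.mp hx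
      rw [map_mul, hδy x hxΓ hxS y hy (ne_of_mem_of_not_mem hyS hxS), mul_zero]
    · rw [sum_eq_single_of_mem y (mem_filter.mpr ⟨hy, hyS⟩)]
      · rw [map_mul, eval_C, hδx y hy hyS, mul_one]
      · intro x hx hxy
        obtain ⟨hxΓ, hxS⟩ := mem_filter.mp hx
        rw [map_mul, hδy x hxΓ hxS y hy (Ne.symm hxy), mul_zero]
  have hrest : f - ∑ x ∈ Γ', C (eval x f) * δ x ∈ I :=
    hΓ fun y hy => by simp [hinterp y hy]
  have hsum : ∑ x ∈ Γ', C (eval x f) * δ x ∈ I :=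
    I.sum_mem fun x hx => I.mul_mem_left _ (hδI x (mem_filter.mp hx).1 (mem_filter.mp hx).2)
  simpa using I.add_mem hrest hsum

end MvPolynomial

def integerWindow (r s : ℕ) : Finset ℚ :=
  (range (r + s + 1)).image fun j : ℕ => (r : ℚ) - j

def mixedTensorWeights (σ : Type*) [Fintype σ] (r s : ℕ) : Set (σ → ℤ) :=
  {lam | (∑ a, lam a) = (r : ℤ) - (s : ℤ) ∧
    ∀ A : Finset σ, A.Nonempty → A ≠ univ → (-(s : ℤ) ≤ ∑ a ∈ A, lam a ∧ (∑ a ∈ A, lam a) ≤ (r : ℤ))}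

def mixedTensorGenerators (σ : Type*) [Fintype σ] (r s : ℕ) : Set (MvPolynomial σ ℚ) :=
  {(∑ a, X a) - C ((r : ℚ) - (s : ℚ))} ∪
    (fun A : Finset σ => ∏ j ∈ range (r + s + 1), ((∑ a ∈ A, X a) - C ((r : ℚ) - (j : ℚ)))) ''
      {A : Finset σ | A.Nonempty ∧ A ≠ univ}

section MixedTensor

variable {σ : Type*} {r s : ℕ}

theorem integerWindow_nonempty : (integerWindow r s).Nonempty :=
  ⟨r, mem_image.mpr ⟨0, by simp⟩⟩

theorem intCast_mem_integerWindow_iff {m : ℤ} :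
    (m : ℚ) ∈ integerWindow r s ↔ -(s : ℤ) ≤ m ∧ m ≤ r := by
  simp only [integerWindow, mem_image, mem_range]
  constructor
  · rintro ⟨j, hj, hjm⟩
    have : (r : ℤ) - j = m := by exact_mod_cast hjm
    omega
  · rintro ⟨hsm, hmr⟩
    have hm : (r : ℤ) - ((r - m).toNat : ℕ) = m := by omega
    exact ⟨(r - m).toNat, by omega, by exact_mod_cast hm⟩

theorem exists_intCast_eq_of_mem_integerWindow {t : ℚ} (ht : t ∈ integerWindow r s) :
    ∃ m : ℤ, (m : ℚ) = t := by
  obtain ⟨j, -, rfl⟩ := mem_image.mp ht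
  exact ⟨r - j, by push_cast; rfl⟩

theorem prod_range_sub_C_eq_prod_integerWindow (p : MvPolynomial σ ℚ) :
    ∏ j ∈ range (r + s + 1), (p - C ((r : ℚ) - j)) = ∏ t ∈ integerWindow r s, (p - C t) := by
  rw [integerWindow, prod_image]
  intro i _ j _ hij
  simpa using hij

theorem eval_intCast_sum_X (lam : σ → ℤ) (A : Finset σ) :
    eval (fun a => (lam a : ℚ)) (∑ a ∈ A, X a) = ((∑ a ∈ A, lam a : ℤ) : ℚ) := by
  simp

theorem eval_intCast_sum_X_sub_C_eq_zero_iff [Fintype σ] (lam : σ → ℤ) :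
    eval (fun a => (lam a : ℚ)) ((∑ a, X a) - C ((r : ℚ) - (s : ℚ))) = 0 ↔
      (∑ a, lam a) = (r : ℤ) - (s : ℤ) := by
  rw [map_sub, eval_intCast_sum_X, eval_C, sub_eq_zero]
  exact_mod_cast Iff.rfl

theorem eval_intCast_prod_range_eq_zero_iff (lam : σ → ℤ) (A : Finset σ) :
    eval (fun a => (lam a : ℚ))
        (∏ j ∈ range (r + s + 1), ((∑ a ∈ A, X a) - C ((r : ℚ) - (j : ℚ)))) = 0 ↔
      -(s : ℤ) ≤ ∑ a ∈ A, lam a ∧ (∑ a ∈ A, lam a) ≤ (r : ℤ) := by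
  rw [prod_range_sub_C_eq_prod_integerWindow, map_prod, prod_eq_zero_iff,
    ← intCast_mem_integerWindow_iff, ← eval_intCast_sum_X]
  simp only [map_sub, eval_C, sub_eq_zero, exists_eq_right']

theorem mem_mixedTensorWeights_iff_forall_eval_eq_zero [Fintype σ] (lam : σ → ℤ) :
    lam ∈ mixedTensorWeights σ r s ↔
      ∀ g ∈ mixedTensorGenerators σ r s, eval (fun a => (lam a : ℚ)) g = 0 := by
  simp only [mixedTensorGenerators, Set.singleton_union, Set.forall_mem_insert,
    Set.forall_mem_image, eval_intCast_sum_X_sub_C_eq_zero_iff,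
    eval_intCast_prod_range_eq_zero_iff, Set.mem_ofPred_eq, and_imp]
  rfl

theorem prod_integerWindow_X_sub_C_mem_span [Fintype σ] (a : σ) :
    ∏ t ∈ integerWindow r s, (X a - C t) ∈ Ideal.span (mixedTensorGenerators σ r s) := by
  by_cases ha : ({a} : Finset σ) = univ
  · -- only when `σ` is a singleton; then `∑ b, X b - (r - s)` is a factor of the product
    have hrs : ((r - s : ℤ) : ℚ) ∈ integerWindow r s := intCast_mem_integerWindow_iff.mpr (by omega)
    have hsum : (∑ b, X b : MvPolynomial σ ℚ) = X a := by rw [← ha, sum_singleton]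
    push_cast at hrs
    rw [← mul_prod_erase _ _ hrs, ← hsum]
    exact Ideal.mul_mem_right _ _ (Ideal.subset_span (Or.inl rfl))
  · rw [← sum_singleton X a, ← prod_range_sub_C_eq_prod_integerWindow]
    exact Ideal.subset_span (Or.inr ⟨{a}, ⟨singleton_nonempty a, ha⟩, rfl⟩)

end MixedTensor

theorem stmt11_general (n r s : ℕ) :
    MvPolynomial.vanishingIdeal ℚ
        ((fun lam : Fin n → ℤ => fun a : Fin n => (lam a : ℚ)) ''
          {lam : Fin n → ℤ |
            (∑ a, lam a) = (r : ℤ) - (s : ℤ) ∧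
            ∀ A : Finset (Fin n), A.Nonempty → A ≠ Finset.univ →
              (-(s : ℤ) ≤ ∑ a ∈ A, lam a ∧ (∑ a ∈ A, lam a) ≤ (r : ℤ))}) =
      Ideal.span
        ({(∑ a, MvPolynomial.X a) - MvPolynomial.C ((r : ℚ) - (s : ℚ))} ∪
          (fun A : Finset (Fin n) =>
              ∏ j ∈ Finset.range (r + s + 1),
                ((∑ a ∈ A, MvPolynomial.X a) - MvPolynomial.C ((r : ℚ) - (j : ℚ)))) ''
            {A : Finset (Fin n) | A.Nonempty ∧ A ≠ Finset.univ}) := by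
  change vanishingIdeal ℚ ((fun lam a => (lam a : ℚ)) '' mixedTensorWeights (Fin n) r s) =
    Ideal.span (mixedTensorGenerators (Fin n) r s)
  refine le_antisymm ?_ (Ideal.span_le.mpr fun g hg => ?_)
  · refine vanishingIdeal_le_of_exists_eval_ne_zero (Fintype.piFinset fun _ => integerWindow r s)
      ?_ fun x hx hxD => ?_
    · rw [Fintype.coe_piFinset]
      refine (vanishingIdeal_pi_le_span _ fun _ => integerWindow_nonempty).trans ?_
      exact Ideal.span_le.mpr (Set.range_subset_iff.mpr prod_integerWindow_X_sub_C_mem_span)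
    · choose lam hlam using fun a =>
        exists_intCast_eq_of_mem_integerWindow (Fintype.mem_piFinset.mp hx a)
      obtain rfl : (fun a => (lam a : ℚ)) = x := funext hlam
      have hlamD : ¬∀ g ∈ mixedTensorGenerators (Fin n) r s, eval (fun a => (lam a : ℚ)) g = 0 :=
        fun h => hxD ⟨lam, (mem_mixedTensorWeights_iff_forall_eval_eq_zero lam).mpr h, rfl⟩
      obtain ⟨g, hg, hgx⟩ := not_forall₂.mp hlamD
      exact ⟨g, Ideal.subset_span hg, hgx⟩
  · rintro _ ⟨lam, hlam, rfl⟩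
    exact (mem_mixedTensorWeights_iff_forall_eval_eq_zero lam).mp hlam g hg

/-- Let `D` be the set of `λ ∈ ℤ^n` with `∑ λ_a = r − s` and with
every proper partial sum `∑_{a ∈ A} λ_a` (for `A` a nonempty proper subset of the
indices) lying in `[−s, r]`, viewed as points of `ℚ^n`.  Then the vanishing ideal of `D`
in `ℚ[X₁,…,Xₙ]` equals the ideal generated by `(X₁ + ⋯ + Xₙ) − (r − s)` together with
`(P_A + s)(P_A + s − 1)⋯(P_A − r)` for each nonempty proper subset `A`, where
`P_A = ∑_{a ∈ A} X_a`. -/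
theorem stmt11 (n r s : ℕ) (hn : 1 ≤ n) :
    MvPolynomial.vanishingIdeal ℚ
        ((fun lam : Fin n → ℤ => fun a : Fin n => (lam a : ℚ)) ''
          {lam : Fin n → ℤ |
            (∑ a, lam a) = (r : ℤ) - (s : ℤ) ∧
            ∀ A : Finset (Fin n), A.Nonempty → A ≠ Finset.univ →
              (-(s : ℤ) ≤ ∑ a ∈ A, lam a ∧ (∑ a ∈ A, lam a) ≤ (r : ℤ))}) =
      Ideal.span
        ({(∑ a, MvPolynomial.X a) - MvPolynomial.C ((r : ℚ) - (s : ℚ))} ∪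
          (fun A : Finset (Fin n) =>
              ∏ j ∈ Finset.range (r + s + 1),
                ((∑ a ∈ A, MvPolynomial.X a) - MvPolynomial.C ((r : ℚ) - (j : ℚ)))) ''
            {A : Finset (Fin n) | A.Nonempty ∧ A ≠ Finset.univ}) :=
  stmt11_general n r s
end

section
/- Let n ≥ 1 and r ≥ 0, and let D = {λ ∈ ℤ^n : |λ_1| + ⋯ + |λ_n| ≤ r}, viewed as a finite set of points of ℚ^n. Then the vanishing ideal in ℚ[X_1,…,X_n] of D equals the ideal generated by the polynomials (X_i + r)(X_i + r − 1)(X_i + r − 2)⋯(X_i − r) for i = 1,…,n, together with the polynomials (J_ε + r)(J_ε + r − 1)(J_ε + r − 2)⋯(J_ε − r) for each of the 2^n sign vectors ε ∈ {±1}^n, where J_ε = ε_1 X_1 + ⋯ + ε_n X_n. -/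
/-!
Every generator vanishes on `D`, because `|∑ ε_a λ_a| ≤ ∑ |λ_a|` for a sign vector `ε`.
Conversely, by the combinatorial Nullstellensatz the one-variable generators already generate the
vanishing ideal of the cube `G = [-r, r]^n`, and a point `λ ∈ G \ D` is a non-zero of the
generator for a sign vector `ε` with `ε_a λ_a = |λ_a|`, as `∑ ε_a λ_a = ∑ |λ_a| > r`. Multiplying
these generators by interpolation polynomials of the points of `G` shows that an ideal containing
the vanishing ideal of `G` and, for each point of `G \ D`, a member not vanishing at it, contains
the vanishing ideal of `D`.
-/

open Finset

namespace MvPolynomial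

variable {σ F : Type*} [Field F]

theorem mem_vanishingIdeal_iff_eval {V : Set (σ → F)} {p : MvPolynomial σ F} :
    p ∈ vanishingIdeal F V ↔ ∀ x ∈ V, eval x p = 0 :=
  Iff.rfl

theorem vanishingIdeal_piFinset_le_span [Fintype σ] [DecidableEq σ] (S : σ → Finset F)
    (hS : ∀ i, (S i).Nonempty) :
    vanishingIdeal F (Fintype.piFinset S : Set (σ → F)) ≤
      Ideal.span (Set.range fun i ↦ ∏ s ∈ S i, (X i - C s)) := by
  intro f hf
  obtain ⟨h, -, rfl⟩ := combinatorial_nullstellensatz_exists_linearCombination S hS f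
    fun x hx ↦ by simpa using hf x (by simpa using hx)
  rw [Ideal.span, ← Finsupp.range_linearCombination]
  exact LinearMap.mem_range_self _ h

theorem exists_eval_eq_one_eval_eq_zero_s12 {μ ν : σ → F} (h : ν ≠ μ) :
    ∃ p : MvPolynomial σ F, eval μ p = 1 ∧ eval ν p = 0 := by
  obtain ⟨i, hi⟩ := Function.ne_iff.mp h
  exact ⟨C (μ i - ν i)⁻¹ * (X i - C (ν i)), by simp [sub_ne_zero.mpr hi.symm], by simp⟩

theorem exists_eval_eq_one_forall_eval_eq_zero [DecidableEq (σ → F)] (μ : σ → F)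
    (G : Finset (σ → F)) :
    ∃ p : MvPolynomial σ F, eval μ p = 1 ∧ ∀ ν ∈ G, ν ≠ μ → eval ν p = 0 := by
  induction G using Finset.induction_on with
  | empty => exact ⟨1, by simp, by simp⟩
  | insert ν G _ ih =>
    obtain ⟨p, hpμ, hpG⟩ := ih
    by_cases hν : ν = μ
    · exact ⟨p, hpμ, by simpa [hν] using hpG⟩
    obtain ⟨q, hqμ, hqν⟩ := exists_eval_eq_one_eval_eq_zero_s12 hν
    refine ⟨p * q, by simp [hpμ, hqμ], ?_⟩
    rintro ν' hν' hν'μ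
    rcases mem_insert.mp hν' with rfl | hν'
    · simp [hqν]
    · simp [hpG ν' hν' hν'μ]

theorem exists_mem_eval_eq_one_forall_eval_eq_zero {I : Ideal (MvPolynomial σ F)}
    (G : Finset (σ → F)) {μ : σ → F} {g : MvPolynomial σ F} (hg : g ∈ I) (hμ : eval μ g ≠ 0) :
    ∃ p ∈ I, eval μ p = 1 ∧ ∀ ν ∈ G, ν ≠ μ → eval ν p = 0 := by
  classical
  obtain ⟨e, heμ, heG⟩ := exists_eval_eq_one_forall_eval_eq_zero μ G
  refine ⟨C (eval μ g)⁻¹ * e * g, I.mul_mem_left _ hg, by simp [heμ, hμ], ?_⟩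
  intro ν hν hνμ
  simp [heG ν hν hνμ]

theorem vanishingIdeal_le_of_exists_eval_ne_zero_s12 {I : Ideal (MvPolynomial σ F)}
    (G : Finset (σ → F)) (D : Set (σ → F)) (hG : vanishingIdeal F (G : Set (σ → F)) ≤ I)
    (hI : ∀ μ ∈ G, μ ∉ D → ∃ g ∈ I, eval μ g ≠ 0) :
    vanishingIdeal F D ≤ I := by
  classical
  intro f hf
  rw [mem_vanishingIdeal_iff_eval] at hf
  have hp : ∀ μ ∈ G, μ ∉ D → ∃ p ∈ I, eval μ p = 1 ∧ ∀ ν ∈ G, ν ≠ μ → eval ν p = 0 := by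
    intro μ hμG hμD
    obtain ⟨g, hg, hgμ⟩ := hI μ hμG hμD
    exact exists_mem_eval_eq_one_forall_eval_eq_zero G hg hgμ
  choose! p hpI hpμ hpG using hp
  -- `f` agrees on `G` with `∑ μ ∈ G \ D, f(μ) p_μ`, and every `p_μ` lies in `I`.
  set B := G.filter (· ∉ D)
  have hfB : f - ∑ μ ∈ B, C (eval μ f) * p μ ∈ vanishingIdeal F (G : Set (σ → F)) := by
    refine mem_vanishingIdeal_iff_eval.mpr fun ν hν ↦ ?_
    have hterm : ∀ μ ∈ B, eval ν (C (eval μ f) * p μ) = if μ = ν then eval ν f else 0 := by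
      intro μ hμ
      obtain ⟨hμG, hμD⟩ := mem_filter.mp hμ
      split_ifs with hμν
      · simp [← hμν, hpμ μ hμG hμD]
      · simp [hpG μ hμG hμD ν hν (Ne.symm hμν)]
    rw [map_sub, map_sum, sum_congr rfl hterm, sum_ite_eq']
    by_cases hνD : ν ∈ D
    · simp [hf ν hνD]
    · simp [B, hνD, mem_coe.mp hν]
  have hB : ∑ μ ∈ B, C (eval μ f) * p μ ∈ I := by
    refine I.sum_mem fun μ hμ ↦ I.mul_mem_left _ ?_
    obtain ⟨hμG, hμD⟩ := mem_filter.mp hμ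
    exact hpI μ hμG hμD
  simpa using I.add_mem (hG hfB) hB

end MvPolynomial

open MvPolynomial

section SignedCompositions

variable {σ : Type*}

theorem prod_range_intCast_sub_eq_zero_iff (r : ℕ) (m : ℤ) :
    ∏ j ∈ range (2 * r + 1), ((m : ℚ) - ((r : ℚ) - j)) = 0 ↔ |m| ≤ r := by
  simp only [prod_eq_zero_iff, mem_range, sub_eq_zero, abs_le]
  constructor
  · rintro ⟨j, hj, h⟩
    have : m = r - j := by exact_mod_cast h
    omega
  · intro h
    refine ⟨(r - m).toNat, by omega, ?_⟩
    have : m = r - ((r - m).toNat : ℤ) := by omega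
    exact_mod_cast this

theorem eval_prod_range_sub_C_eq_zero_iff (r : ℕ) (x : σ → ℚ) (P : MvPolynomial σ ℚ) {m : ℤ}
    (hm : eval x P = m) :
    eval x (∏ j ∈ range (2 * r + 1), (P - C ((r : ℚ) - j))) = 0 ↔ |m| ≤ r := by
  simp only [map_prod, map_sub, eval_C, hm]
  exact prod_range_intCast_sub_eq_zero_iff r m

theorem eval_intCast_sum_C_mul_X [Fintype σ] (ε lam : σ → ℤ) :
    eval (fun a ↦ (lam a : ℚ)) (∑ a, C (ε a : ℚ) * X a) = ((∑ a, ε a * lam a : ℤ) : ℚ) := by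
  simp

theorem abs_sum_mul_le_sum_abs [Fintype σ] {ε : σ → ℤ} (hε : ∀ a, ε a = 1 ∨ ε a = -1)
    (lam : σ → ℤ) : |∑ a, ε a * lam a| ≤ ∑ a, |lam a| :=
  calc |∑ a, ε a * lam a| ≤ ∑ a, |ε a * lam a| := abs_sum_le_sum_abs _ _
    _ = ∑ a, |lam a| := sum_congr rfl fun a _ ↦ by rcases hε a with h | h <;> simp [h]

theorem sum_ite_nonneg_mul_eq_sum_abs [Fintype σ] (lam : σ → ℤ) :
    ∑ a, (if 0 ≤ lam a then 1 else -1) * lam a = ∑ a, |lam a| :=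
  sum_congr rfl fun a _ ↦ by
    split_ifs with h
    · simp [abs_of_nonneg h]
    · simp [abs_of_neg (not_le.mp h)]

theorem exists_intCast_eq_of_mem_piFinset [Fintype σ] [DecidableEq σ] {r : ℕ} {μ : σ → ℚ}
    (hμ : μ ∈ Fintype.piFinset fun _ ↦ (range (2 * r + 1)).image fun j : ℕ ↦ (r : ℚ) - j) :
    ∃ lam : σ → ℤ, μ = fun a ↦ (lam a : ℚ) := by
  simp only [Fintype.mem_piFinset, mem_image] at hμ
  choose j _ hj using hμ
  exact ⟨fun a ↦ r - j a, funext fun a ↦ by simp [← hj a]⟩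

end SignedCompositions

theorem stmt12_general (n r : ℕ) :
    MvPolynomial.vanishingIdeal ℚ
        ((fun lam : Fin n → ℤ => fun a : Fin n => (lam a : ℚ)) ''
          {lam : Fin n → ℤ | (∑ a, |lam a|) ≤ (r : ℤ)}) =
      Ideal.span
        ((Set.range fun i : Fin n =>
            ∏ j ∈ Finset.range (2 * r + 1),
              (MvPolynomial.X i - MvPolynomial.C ((r : ℚ) - (j : ℚ)))) ∪
          (fun eps : Fin n → ℤ =>
              ∏ j ∈ Finset.range (2 * r + 1),
                ((∑ a, MvPolynomial.C (eps a : ℚ) * MvPolynomial.X a) -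
                  MvPolynomial.C ((r : ℚ) - (j : ℚ)))) ''
            {eps : Fin n → ℤ | ∀ a, eps a = 1 ∨ eps a = -1}) := by
  set T : Finset ℚ := (range (2 * r + 1)).image fun j : ℕ ↦ (r : ℚ) - j
  apply le_antisymm
  · refine vanishingIdeal_le_of_exists_eval_ne_zero_s12 (Fintype.piFinset fun _ ↦ T) _ ?_ ?_
    · refine (vanishingIdeal_piFinset_le_span _ fun _ ↦ by simp [T]).trans (Ideal.span_mono ?_)
      rintro _ ⟨i, rfl⟩
      exact Or.inl ⟨i, by simp only [T]; rw [prod_image fun _ _ _ _ h ↦ by simpa using h]⟩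
    · intro μ hμ hμD
      obtain ⟨lam, rfl⟩ := exists_intCast_eq_of_mem_piFinset hμ
      set ε : Fin n → ℤ := fun a ↦ if 0 ≤ lam a then 1 else -1
      have hε : ∀ a, ε a = 1 ∨ ε a = -1 := fun a ↦ by by_cases h : 0 ≤ lam a <;> simp [ε, h]
      refine ⟨_, Ideal.subset_span (Or.inr ⟨ε, hε, rfl⟩), ?_⟩
      rw [Ne, eval_prod_range_sub_C_eq_zero_iff r _ _ (eval_intCast_sum_C_mul_X ε lam),
        sum_ite_nonneg_mul_eq_sum_abs]
      exact fun h ↦ hμD ⟨lam, (le_abs_self _).trans h, rfl⟩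
  · rw [Ideal.span_le]
    rintro p hp _ ⟨lam, hlam, rfl⟩
    rcases hp with ⟨i, rfl⟩ | ⟨ε, hε, rfl⟩
    · refine (eval_prod_range_sub_C_eq_zero_iff r _ (X i) (m := lam i) (by simp)).mpr ?_
      exact (single_le_sum (fun a _ ↦ abs_nonneg (lam a)) (mem_univ i)).trans hlam
    · refine (eval_prod_range_sub_C_eq_zero_iff r _ _ (eval_intCast_sum_C_mul_X ε lam)).mpr ?_
      exact (abs_sum_mul_le_sum_abs hε lam).trans hlam

/-- Let `D = {λ ∈ ℤ^n : |λ_1| + ⋯ + |λ_n| ≤ r}`, viewed as points of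
`ℚ^n`.  Then the vanishing ideal of `D` in `ℚ[X₁,…,Xₙ]` equals the ideal generated by
`(X_i + r)(X_i + r − 1)⋯(X_i − r)` for `i = 1,…,n`, together with
`(J_ε + r)(J_ε + r − 1)⋯(J_ε − r)` for each sign vector `ε ∈ {±1}^n`, where
`J_ε = ε₁X₁ + ⋯ + εₙXₙ`. -/
theorem stmt12 (n r : ℕ) (hn : 1 ≤ n) :
    MvPolynomial.vanishingIdeal ℚ
        ((fun lam : Fin n → ℤ => fun a : Fin n => (lam a : ℚ)) ''
          {lam : Fin n → ℤ | (∑ a, |lam a|) ≤ (r : ℤ)}) =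
      Ideal.span
        ((Set.range fun i : Fin n =>
            ∏ j ∈ Finset.range (2 * r + 1),
              (MvPolynomial.X i - MvPolynomial.C ((r : ℚ) - (j : ℚ)))) ∪
          (fun eps : Fin n → ℤ =>
              ∏ j ∈ Finset.range (2 * r + 1),
                ((∑ a, MvPolynomial.C (eps a : ℚ) * MvPolynomial.X a) -
                  MvPolynomial.C ((r : ℚ) - (j : ℚ)))) ''
            {eps : Fin n → ℤ | ∀ a, eps a = 1 ∨ eps a = -1}) :=
  stmt12_general n r
end

section
/- Let n ≥ 2 and m ∈ ℕ. The set ⋃_{j=0}^{m} W_j is saturated: if ω ∈ ⋃_{j=0}^{m} W_j and μ ∈ X^+ satisfies ω − μ = Σ_{i=1}^{n} t_i α_i with all t_i ∈ ℕ, then μ ∈ ⋃_{j=0}^{m} W_j. -/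
/-- The simple roots of type `B_n` in coordinates: `α_i = ε_i − ε_{i+1}` for
`i < n − 1` (0-indexed) and `α_{n−1} = ε_{n−1}`. -/
def simpleRootB (n : ℕ) (i : Fin n) : Fin n → ℚ :=
  fun a => (if a = i then 1 else 0) - (if (a : ℕ) = (i : ℕ) + 1 then 1 else 0)

/-- The `SO(2n+1)`-fundamental weights: `ϖ_1,…,ϖ_{n−1}, 2ϖ_n`; in 0-indexed
coordinates the `i`-th one is `ε_0 + ⋯ + ε_i`. -/
def soWeightB (n : ℕ) (i : Fin n) : Fin n → ℚ :=
  fun a => if (a : ℕ) ≤ (i : ℕ) then 1 else 0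

/-- `W_j`: nonnegative integral combinations `m_1ϖ_1 + ⋯ + m_{n−1}ϖ_{n−1} + m_n(2ϖ_n)`
with coefficient sum `j`. -/
def Wset (n j : ℕ) : Set (Fin n → ℚ) :=
  {w | ∃ m : Fin n → ℕ, (∑ i, m i) = j ∧ w = ∑ i, (m i : ℚ) • soWeightB n i}

/-- The dominant weights of type `B_n`:
`μ_1 ≥ μ_2 ≥ ⋯ ≥ μ_n ≥ 0` with all coordinates in `ℤ` or all in `1/2 + ℤ`. -/
def dominantB (n : ℕ) : Set (Fin n → ℚ) :=
  {mu | (∀ i j : Fin n, i ≤ j → mu j ≤ mu i) ∧ (∀ i, 0 ≤ mu i) ∧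
    ((∀ i, ∃ k : ℤ, mu i = k) ∨ (∀ i, ∃ k : ℤ, mu i = (k : ℚ) + 1 / 2))}

lemma telescope (f : ℕ → ℤ) (a n : ℕ) (h : a ≤ n) :
    ∑ i ∈ Finset.Ico a n, (f i - f (i+1)) = f a - f n := by
  induction n with
  | zero => interval_cases a; simp
  | succ n ih =>
    rcases Nat.lt_or_ge a (n+1) with h' | h'
    · have ha : a ≤ n := Nat.lt_succ_iff.mp h'
      rw [Finset.sum_Ico_succ_top ha, ih ha]; ring
    · have : a = n + 1 := le_antisymm h h'
      subst this; simp

lemma filterIco (a n : ℕ) :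
    (Finset.range n).filter (fun i => a ≤ i) = Finset.Ico a n := by
  ext i; simp [Finset.mem_Ico, and_comm]

/-- For `n ≥ 2` and `m ∈ ℕ`, the set `⋃_{j=0}^{m} W_j` is saturated:
if `ω ∈ ⋃_{j≤m} W_j` and `μ ∈ X⁺` with `ω − μ = ∑ i, t_i α_i`, `t_i ∈ ℕ`, then
`μ ∈ ⋃_{j≤m} W_j`. -/
theorem stmt15 (n m : ℕ) (hn : 2 ≤ n) (w mu : Fin n → ℚ)
    (hw : ∃ j ≤ m, w ∈ Wset n j) (hmu : mu ∈ dominantB n)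
    (t : Fin n → ℕ) (ht : w - mu = ∑ i, (t i : ℚ) • simpleRootB n i) :
    ∃ j ≤ m, mu ∈ Wset n j := by
  obtain ⟨j, hjm, mm, hsum, hweq⟩ := hw
  obtain ⟨hanti, hnn, -⟩ := hmu
  have npos : 0 < n := by omega
  have hwa : ∀ a : Fin n, w a = ∑ i, (mm i : ℚ) * (if (a:ℕ) ≤ (i:ℕ) then 1 else 0) := by
    intro a
    rw [hweq]
    simp [Finset.sum_apply, soWeightB]
  have hda : ∀ a : Fin n, w a - mu a =
      ∑ i, (t i : ℚ) * ((if a = i then 1 else 0) - (if (a:ℕ) = (i:ℕ)+1 then 1 else 0)) := by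
    intro a
    have h := congrFun ht a
    simpa [Finset.sum_apply, simpleRootB, Pi.sub_apply] using h
  set S : Fin n → ℤ := fun a =>
    (∑ i, (mm i : ℤ) * (if (a:ℕ) ≤ (i:ℕ) then 1 else 0)) -
    (∑ i, (t i : ℤ) * ((if a = i then 1 else 0) - (if (a:ℕ) = (i:ℕ)+1 then 1 else 0))) with hSdef
  have hmuS : ∀ a, mu a = (S a : ℚ) := by
    intro a
    have h1 : mu a = w a - (w a - mu a) := by ring
    rw [h1, hda a, hwa a, hSdef]
    push_cast [apply_ite (fun x : ℤ => (x : ℚ))]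
    ring
  set K : ℕ → ℤ := fun i => if h : i < n then S ⟨i, h⟩ else 0 with hKdef
  have hKnn : ∀ i, 0 ≤ K i := by
    intro i
    by_cases h : i < n
    · have h2 := hnn ⟨i, h⟩
      rw [hmuS] at h2
      have : (0:ℤ) ≤ S ⟨i, h⟩ := by exact_mod_cast h2
      simpa [hKdef, h] using this
    · simp [hKdef, h]
  have hKstep : ∀ i, i < n → K (i+1) ≤ K i := by
    intro i hi
    by_cases h : i + 1 < n
    · have hle : (⟨i, hi⟩ : Fin n) ≤ ⟨i+1, h⟩ := by
        simp [Fin.mk_le_mk]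
      have h2 := hanti ⟨i, hi⟩ ⟨i+1, h⟩ hle
      rw [hmuS, hmuS] at h2
      simp only [hKdef, dif_pos h, dif_pos hi]
      exact_mod_cast h2
    · have h2 := hnn ⟨i, hi⟩
      rw [hmuS] at h2
      simp only [hKdef, dif_neg h, dif_pos hi]
      exact_mod_cast h2
  set M : ℕ → ℕ := fun i => (K i - K (i+1)).toNat with hMdef
  have hMcast : ∀ i, i < n → (M i : ℤ) = K i - K (i+1) := by
    intro i hi
    simp only [hMdef]
    exact Int.toNat_of_nonneg (sub_nonneg.mpr (hKstep i hi))
  have hKn : K n = 0 := by simp [hKdef]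
  have hIco : ∀ a, a ≤ n → ∑ i ∈ Finset.Ico a n, (M i : ℤ) = K a := by
    intro a ha
    rw [Finset.sum_congr rfl (fun i hi => hMcast i (Finset.mem_Ico.mp hi).2),
      telescope K a n ha, hKn, sub_zero]
  have hcoord : ∀ a : Fin n, mu a = ∑ i : Fin n, (M (i:ℕ) : ℚ) * (if (a:ℕ) ≤ (i:ℕ) then 1 else 0) := by
    intro a
    rw [Fin.sum_univ_eq_sum_range (fun i => (M i : ℚ) * (if (a:ℕ) ≤ i then 1 else 0))]
    have : ∀ i, (M i : ℚ) * (if (a:ℕ) ≤ i then 1 else 0) = if (a:ℕ) ≤ i then (M i : ℚ) else 0 := by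
      intro i; split <;> ring
    simp only [this]
    rw [← Finset.sum_filter, filterIco]
    have h1 : (a:ℕ) ≤ n := le_of_lt a.isLt
    have h2 := hIco (a:ℕ) h1
    have h3 : ((∑ i ∈ Finset.Ico (a:ℕ) n, (M i : ℤ)) : ℚ) = (K (a:ℕ) : ℚ) := by
      exact_mod_cast congrArg (fun x : ℤ => (x:ℚ)) h2
    push_cast at h3
    rw [h3]
    have : K (a:ℕ) = S a := by simp [hKdef, a.isLt]
    rw [this, ← hmuS]
  -- mu 0 ≤ j
  set z : Fin n := ⟨0, npos⟩ with hz
  have hmu0 : mu z ≤ j := by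
    have hd := hda z
    have hw0 : w z = j := by
      rw [hwa z]
      have : ∀ i : Fin n, (mm i : ℚ) * (if (z:ℕ) ≤ (i:ℕ) then 1 else 0) = (mm i : ℚ) := by
        intro i; simp [hz]
      simp only [this]
      rw [← Nat.cast_sum, hsum]
    have hrhs : (0:ℚ) ≤ ∑ i, (t i : ℚ) * ((if z = i then 1 else 0) - (if (z:ℕ) = (i:ℕ)+1 then 1 else 0)) := by
      apply Finset.sum_nonneg
      intro i _
      have : ¬ ((z:ℕ) = (i:ℕ)+1) := by simp [hz]
      simp only [this, if_false, sub_zero]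
      positivity
    rw [← hd, hw0] at hrhs
    linarith
  have hK0j : K 0 ≤ (j:ℤ) := by
    have : (K 0 : ℚ) ≤ (j:ℚ) := by
      have : K 0 = S z := by simp [hKdef, npos, hz]
      rw [this, ← hmuS]; exact hmu0
    exact_mod_cast this
  refine ⟨(K 0).toNat, ?_, fun i => M (i:ℕ), ?_, ?_⟩
  · have : (K 0).toNat ≤ j := by omega
    omega
  · show ∑ i : Fin n, M (i:ℕ) = (K 0).toNat
    have h1 : ∑ i : Fin n, M (i:ℕ) = ∑ i ∈ Finset.range n, M i :=
      Fin.sum_univ_eq_sum_range (fun i => M i) n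
    have h2 : ((∑ i ∈ Finset.range n, M i : ℕ) : ℤ) = K 0 := by
      push_cast
      rw [Finset.range_eq_Ico]
      exact hIco 0 (Nat.zero_le n)
    have h3 : ((K 0).toNat : ℤ) = K 0 := Int.toNat_of_nonneg (hKnn 0)
    omega
  · funext a
    rw [hcoord a]
    simp [Finset.sum_apply, soWeightB]
end

section
/- Let n ≥ 2 and m ∈ ℕ. The set {ϖ_n + ω : ω ∈ ⋃_{j=0}^{m} W_j} is saturated: if ω ∈ ⋃_{j=0}^{m} W_j and μ ∈ X^+ satisfies (ϖ_n + ω) − μ = Σ_{i=1}^{n} t_i α_i with all t_i ∈ ℕ, then μ = ϖ_n + ω′ for some ω′ ∈ ⋃_{j=0}^{m} W_j. -/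
/-- The last fundamental weight `ϖ_n = (ε_1 + ⋯ + ε_n)/2` of type `B_n`. -/
def spinWeightB (n : ℕ) : Fin n → ℚ := fun _ => 1 / 2

/-- For `n ≥ 2`, `m ∈ ℕ`, the set `{ϖ_n + ω : ω ∈ ⋃_{j≤m} W_j}` is
saturated: if `ω ∈ ⋃_{j≤m} W_j` and `μ ∈ X⁺` with `(ϖ_n + ω) − μ = ∑ i, t_i α_i`,
`t_i ∈ ℕ`, then `μ = ϖ_n + ω′` for some `ω′ ∈ ⋃_{j≤m} W_j`. -/
theorem stmt16 (n m : ℕ) (hn : 2 ≤ n) (w mu : Fin n → ℚ)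
    (hw : ∃ j ≤ m, w ∈ Wset n j) (hmu : mu ∈ dominantB n)
    (t : Fin n → ℕ)
    (ht : (spinWeightB n + w) - mu = ∑ i, (t i : ℚ) • simpleRootB n i) :
    ∃ w' : Fin n → ℚ, (∃ j ≤ m, w' ∈ Wset n j) ∧ mu = spinWeightB n + w' := by
  obtain ⟨j, hjm, mm, hmsum, hwdef⟩ := hw
  obtain ⟨hmono, hnn, -⟩ := hmu
  have hz0 : (0:ℕ) < n := by omega
  set z0 : Fin n := ⟨0, hz0⟩ with hz0d
  set lastI : Fin n := ⟨n-1, by omega⟩ with hlastd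
  -- coordinate formula for w
  have hwa : ∀ a : Fin n, w a = ∑ i : Fin n, (mm i : ℚ) * (if (a:ℕ) ≤ (i:ℕ) then 1 else 0) := by
    intro a
    rw [hwdef]
    simp [Finset.sum_apply, soWeightB]
  have hroot : ∀ a : Fin n, (1/2 + w a) - mu a =
      ∑ i : Fin n, (t i : ℚ) * ((if a = i then 1 else 0) - (if (a:ℕ) = (i:ℕ)+1 then 1 else 0)) := by
    intro a
    have h := congrFun ht a
    simpa [spinWeightB, simpleRootB, Finset.sum_apply] using h
  set K : Fin n → ℤ := fun a =>
      (∑ i : Fin n, (mm i : ℤ) * (if (a:ℕ) ≤ (i:ℕ) then 1 else 0)) -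
      ∑ i : Fin n, (t i : ℤ) * ((if a = i then 1 else 0) - (if (a:ℕ) = (i:ℕ)+1 then 1 else 0))
    with hKdef
  have hKcast : ∀ a : Fin n, (K a : ℚ) =
      (∑ i : Fin n, (mm i : ℚ) * (if (a:ℕ) ≤ (i:ℕ) then 1 else 0)) -
      ∑ i : Fin n, (t i : ℚ) * ((if a = i then 1 else 0) - (if (a:ℕ) = (i:ℕ)+1 then 1 else 0)) := by
    intro a
    rw [hKdef]
    push_cast [apply_ite (fun z : ℤ => (z : ℚ))]
    ring
  have hK : ∀ a : Fin n, mu a = (K a : ℚ) + 1/2 := by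
    intro a
    have h1 := hroot a
    have h2 := hKcast a
    have h3 := hwa a
    linarith
  have hKmono : ∀ a b : Fin n, a ≤ b → K b ≤ K a := by
    intro a b hab
    have h := hmono a b hab
    rw [hK a, hK b] at h
    exact_mod_cast (by linarith : (K b : ℚ) ≤ (K a : ℚ))
  have hKnn : ∀ a : Fin n, 0 ≤ K a := by
    intro a
    have hlnn : (0:ℚ) ≤ (K lastI : ℚ) + 1/2 := by rw [← hK]; exact hnn lastI
    have h1 : (-1 : ℚ) < (K lastI : ℚ) := by linarith
    have h2 : (-1 : ℤ) < K lastI := by exact_mod_cast h1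
    have h3 : a ≤ lastI := by
      rw [Fin.le_def]
      simp [hlastd]
      omega
    have := hKmono a lastI h3
    omega
  have hwz0 : w z0 = (j : ℚ) := by
    rw [hwa z0]
    simp [hz0d]
    exact_mod_cast hmsum
  have ht0 : K z0 ≤ (j : ℤ) := by
    have h1 := hroot z0
    have h2 : (∑ i : Fin n, (t i : ℚ) * ((if z0 = i then 1 else 0) - (if (z0:ℕ) = (i:ℕ)+1 then 1 else 0)))
        = t z0 := by
      simp [hz0d]
    rw [h2, hwz0] at h1
    have h3 := hK z0
    have h4 : (K z0 : ℚ) ≤ (j : ℚ) := by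
      have : (0:ℚ) ≤ t z0 := by positivity
      linarith
    exact_mod_cast h4
  -- the integer profile extended to ℕ
  set g : ℕ → ℤ := fun i => if h : i < n then K ⟨i, h⟩ else 0 with hgdef
  have hg_anti : ∀ i k : ℕ, i ≤ k → g k ≤ g i := by
    intro i k hik
    by_cases hk : k < n
    · have hi : i < n := lt_of_le_of_lt hik hk
      simp only [hgdef, dif_pos hk, dif_pos hi]
      exact hKmono ⟨i, hi⟩ ⟨k, hk⟩ (by rw [Fin.mk_le_mk]; exact hik)
    · by_cases hi : i < n
      · simp only [hgdef, dif_neg hk, dif_pos hi]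
        exact hKnn ⟨i, hi⟩
      · simp [hgdef, dif_neg hk, dif_neg hi]
  have hgn : g n = 0 := by simp [hgdef]
  set c : Fin n → ℕ := fun i => (g (i:ℕ) - g ((i:ℕ)+1)).toNat with hcdef
  have hc_cast : ∀ i : Fin n, (c i : ℤ) = g (i:ℕ) - g ((i:ℕ)+1) := by
    intro i
    rw [hcdef]
    exact Int.toNat_of_nonneg (by have := hg_anti i ((i:ℕ)+1) (by omega); omega)
  have hga : ∀ a : Fin n, g (a:ℕ) = K a := by
    intro a
    simp [hgdef, a.isLt]
  -- sum of c
  have hcsum : ∑ i : Fin n, c i = (K z0).toNat := by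
    have h1 : ((∑ i : Fin n, c i : ℕ) : ℤ) = ∑ i : Fin n, (g (i:ℕ) - g ((i:ℕ)+1)) := by
      push_cast
      exact Finset.sum_congr rfl (fun i _ => hc_cast i)
    rw [Fin.sum_univ_eq_sum_range (fun k => g k - g (k+1)) n, Finset.sum_range_sub' g, hgn] at h1
    have h2 : g 0 = K z0 := hga z0
    omega
  refine ⟨fun a => (K a : ℚ), ⟨(K z0).toNat, by omega, c, hcsum, ?_⟩, ?_⟩
  · funext a
    have hrhs : (∑ i : Fin n, (c i : ℚ) • soWeightB n i) a =
        ∑ i : Fin n, (c i : ℚ) * (if (a:ℕ) ≤ (i:ℕ) then 1 else 0) := by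
      simp [Finset.sum_apply, soWeightB]
    rw [hrhs]
    have hterm : ∀ i : Fin n, (c i : ℚ) * (if (a:ℕ) ≤ (i:ℕ) then 1 else 0) =
        (fun k : ℕ => if (a:ℕ) ≤ k then ((g k : ℚ) - (g (k+1) : ℚ)) else 0) (i:ℕ) := by
      intro i
      have : (c i : ℚ) = ((g (i:ℕ) - g ((i:ℕ)+1) : ℤ) : ℚ) := by exact_mod_cast hc_cast i
      rw [this]
      push_cast
      split <;> ring
    rw [Finset.sum_congr rfl (fun i _ => hterm i),
      Fin.sum_univ_eq_sum_range (fun k : ℕ => if (a:ℕ) ≤ k then ((g k : ℚ) - (g (k+1) : ℚ)) else 0) n]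
    have hfil : (Finset.range n).filter (fun k => (a:ℕ) ≤ k) = Finset.Ico (a:ℕ) n := by
      ext k
      simp [Finset.mem_filter, Finset.mem_range, Finset.mem_Ico]
      omega
    have hG := Finset.sum_range_sub' (fun k => ((g k : ℚ))) n
    have hGa := Finset.sum_range_sub' (fun k => ((g k : ℚ))) (a:ℕ)
    rw [← Finset.sum_filter, hfil, Finset.sum_Ico_eq_sub _ (le_of_lt a.isLt), hG, hGa, hgn,
      hga a]
    push_cast
    ring
  · funext a
    simp [spinWeightB, Pi.add_apply, hK a]
    ring
end
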